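/- arXiv:1405.4891 — 5 statements merged into one kernel-verified Lean document; each statement's English description precedes it below -/
import Mathlib

section
/- Let W be a Coxeter group and w ∈ W. Suppose a₁…âᵢ…aₚ (the word with the i-th letter deleted) is a reduced word for w, but the full word a₁…aₚ is not reduced. Then there exists a unique index j ≠ i such that a₁…âⱼ…aₚ is reduced, and moreover a₁…âⱼ…aₚ is also a reduced word for w. -/
namespace CoxDel

open List CoxeterSystem

/-! ### A `ZMod 2`-valued count of occurrences in a list -/

open Classical in
/-- Parity of the number of occurrences of `x` in a list. -/
noncomputable def zcount {α : Type*} (x : α) : List α → ZMod 2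
  | [] => 0
  | a :: t => (if a = x then 1 else 0) + zcount x t

theorem zcount_append {α : Type*} (x : α) (L₁ L₂ : List α) :
    zcount x (L₁ ++ L₂) = zcount x L₁ + zcount x L₂ := by
  induction L₁ with
  | nil => simp [zcount]
  | cons a t ih => simp [zcount, ih, add_assoc]

theorem zcount_reverse {α : Type*} (x : α) (L : List α) :
    zcount x L.reverse = zcount x L := by
  induction L with
  | nil => rfl
  | cons a t ih =>
    rw [reverse_cons, zcount_append, ih]
    simp [zcount, add_comm]

theorem zcount_eq_zero_of_not_mem {α : Type*} {x : α} {L : List α} (h : x ∉ L) :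
    zcount x L = 0 := by
  induction L with
  | nil => rfl
  | cons a t ih =>
    have h1 : ¬ (a = x) := fun hc => h (hc ▸ mem_cons_self)
    have h2 : x ∉ t := fun hc => h (mem_cons_of_mem a hc)
    simp [zcount, h1, ih h2]

theorem mem_of_zcount_ne_zero {α : Type*} {x : α} {L : List α} (h : zcount x L ≠ 0) :
    x ∈ L := by
  by_contra hc
  exact h (zcount_eq_zero_of_not_mem hc)

theorem sum_range_double {A : Type*} [AddCommMonoid A] (g : ℕ → A) (m : ℕ) :
    ∑ k ∈ Finset.range m, (g (2*k) + g (2*k+1)) = ∑ r ∈ Finset.range (2*m), g r := by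
  induction m with
  | zero => simp
  | succ n ih =>
    rw [Finset.sum_range_succ, ih, show 2*(n+1) = 2*n+1+1 by ring,
      Finset.sum_range_succ, Finset.sum_range_succ, add_assoc]

variable {B : Type*} {W : Type*} [Group W] {M : CoxeterMatrix B} (cs : CoxeterSystem M W)

/-! ### The permutation representation on `W × ZMod 2` -/

open Classical in
/-- The function underlying the permutation of `W × ZMod 2` attached to a simple reflection. -/
noncomputable def refFun (i : B) : W × ZMod 2 → W × ZMod 2 :=
  fun p => (cs.simple i * p.1 * cs.simple i, p.2 + if p.1 = cs.simple i then 1 else 0)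

theorem refFun_involutive (i : B) : Function.Involutive (refFun cs i) := by
  intro p
  unfold refFun
  ext
  · simp [mul_assoc]
  · simp only
    by_cases h : p.1 = cs.simple i
    · simp [h, add_assoc, show (1 : ZMod 2) + 1 = 0 by decide]
    · have h2 : ¬ (cs.simple i * p.1 * cs.simple i = cs.simple i) := by
        intro hc
        apply h
        have := congrArg (fun z => cs.simple i * z * cs.simple i) hc
        simpa [mul_assoc] using this
      simp [h, h2]

/-- The permutation of `W × ZMod 2` attached to a simple reflection. -/
noncomputable def refPerm (i : B) : Equiv.Perm (W × ZMod 2) :=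
  (refFun_involutive cs i).toPerm

open Classical in
theorem refPerm_apply (i : B) (p : W × ZMod 2) :
    refPerm cs i p = (cs.simple i * p.1 * cs.simple i,
      p.2 + if p.1 = cs.simple i then 1 else 0) := rfl

theorem simple_mul_pow (i j : B) (n : ℕ) :
    cs.simple j * (cs.simple i * cs.simple j) ^ n
      = ((cs.simple i * cs.simple j)⁻¹) ^ n * cs.simple j := by
  induction n with
  | zero => simp
  | succ n ih =>
    rw [pow_succ, ← mul_assoc, ih]
    have h : cs.simple j * (cs.simple i * cs.simple j)
        = (cs.simple i * cs.simple j)⁻¹ * cs.simple j := by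
      simp [mul_inv_rev, mul_assoc]
    rw [mul_assoc, h, ← mul_assoc, ← pow_succ]

open Classical in
theorem refPerm_mul_pow_apply (i j : B) (n : ℕ) (x : W) (ε : ZMod 2) :
    ((refPerm cs i * refPerm cs j) ^ n) (x, ε) =
      ((cs.simple i * cs.simple j) ^ n * x * ((cs.simple i * cs.simple j)⁻¹) ^ n,
        ε + ∑ k ∈ Finset.range n,
          ((if x = ((cs.simple i * cs.simple j)⁻¹) ^ (2*k) * cs.simple j then (1 : ZMod 2) else 0)
            + (if x = ((cs.simple i * cs.simple j)⁻¹) ^ (2*k+1) * cs.simple j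
                then 1 else 0))) := by
  set q := cs.simple i * cs.simple j with hq
  induction n with
  | zero => simp
  | succ n ih =>
    rw [pow_succ', Equiv.Perm.mul_apply, ih, Equiv.Perm.mul_apply, refPerm_apply, refPerm_apply]
    simp only [Prod.mk.injEq]
    have hqi : (q : W)⁻¹ = cs.simple j * cs.simple i := by
      rw [hq, mul_inv_rev, cs.inv_simple, cs.inv_simple]
    have hmove : ∀ c : W, (q ^ n * x * (q⁻¹) ^ n = c) ↔ (x = (q⁻¹) ^ n * c * q ^ n) := by
      intro c
      constructor
      · intro h; rw [← h]
        rw [inv_pow]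
        group
      · intro h; rw [h]
        rw [inv_pow]
        group
    constructor
    · rw [pow_succ' q, pow_succ q⁻¹, hqi]
      simp [hq, mul_assoc]
    · have he1 : (q⁻¹) ^ n * cs.simple j * q ^ n = (q⁻¹) ^ (2*n) * cs.simple j := by
        rw [mul_assoc, simple_mul_pow, ← mul_assoc, ← pow_add, two_mul]
      have hc1 : (q ^ n * x * (q⁻¹) ^ n = cs.simple j) ↔ (x = (q⁻¹) ^ (2*n) * cs.simple j) := by
        rw [hmove, he1]
      have he2 : (q⁻¹) ^ n * (q⁻¹ * cs.simple j) * q ^ n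
          = (q⁻¹) ^ (2*n+1) * cs.simple j := by
        calc (q⁻¹) ^ n * (q⁻¹ * cs.simple j) * q ^ n
            = (q⁻¹) ^ n * q⁻¹ * (cs.simple j * q ^ n) := by group
          _ = (q⁻¹) ^ n * q⁻¹ * ((q⁻¹) ^ n * cs.simple j) := by rw [simple_mul_pow]
          _ = (q⁻¹) ^ (2*n+1) * cs.simple j := by
              rw [show 2*n+1 = n+1+n by omega, pow_add, pow_succ]
              group
      have hcnd : (cs.simple j * (q ^ n * x * (q⁻¹) ^ n) * cs.simple j = cs.simple i)
          ↔ (q ^ n * x * (q⁻¹) ^ n = q⁻¹ * cs.simple j) := by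
        constructor
        · intro h
          have h2 := congrArg (fun z => cs.simple j * z * cs.simple j) h
          have h3 : q⁻¹ * cs.simple j = cs.simple j * (cs.simple i * cs.simple j) := by
            rw [hqi]; group
          rw [h3]
          simpa [mul_assoc] using h2
        · intro h
          rw [h, hqi]
          simp [mul_assoc]
      have hc2 : (cs.simple j * (q ^ n * x * (q⁻¹) ^ n) * cs.simple j = cs.simple i)
          ↔ (x = (q⁻¹) ^ (2*n+1) * cs.simple j) := by
        rw [hcnd, hmove, he2]
      rw [Finset.sum_range_succ]
      simp only [hc1, hc2]
      ring

open Classical in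
theorem refPerm_liftable : M.IsLiftable (refPerm cs) := by
  intro i j
  apply Equiv.ext
  rintro ⟨x, ε⟩
  rw [refPerm_mul_pow_apply]
  set q := cs.simple i * cs.simple j with hq
  set m := M i j with hm
  have hqm : q ^ m = 1 := cs.simple_mul_simple_pow i j
  have hqm' : (q⁻¹) ^ m = 1 := by rw [inv_pow, hqm, inv_one]
  have hsum : ∑ k ∈ Finset.range m,
      ((if x = (q⁻¹) ^ (2*k) * cs.simple j then (1 : ZMod 2) else 0)
        + (if x = (q⁻¹) ^ (2*k+1) * cs.simple j then 1 else 0)) = 0 := by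
    rw [sum_range_double (fun r => if x = (q⁻¹) ^ r * cs.simple j then (1 : ZMod 2) else 0) m]
    rw [two_mul, Finset.sum_range_add]
    have heq : ∀ r ∈ Finset.range m,
        (if x = (q⁻¹) ^ (m + r) * cs.simple j then (1 : ZMod 2) else 0)
          = (if x = (q⁻¹) ^ r * cs.simple j then (1 : ZMod 2) else 0) := by
      intro r _
      rw [pow_add, hqm', one_mul]
    rw [Finset.sum_congr rfl heq, ← two_mul, show (2 : ZMod 2) = 0 by decide, zero_mul]
  rw [hsum, hqm, hqm']
  simp

/-- The parity permutation representation of the Coxeter group. -/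
noncomputable def prm : W →* Equiv.Perm (W × ZMod 2) :=
  cs.lift ⟨refPerm cs, refPerm_liftable cs⟩

theorem prm_simple (i : B) : prm cs (cs.simple i) = refPerm cs i :=
  cs.lift_apply_simple (refPerm_liftable cs) i

open Classical in
theorem prm_wordProd_apply (ω : List B) (x : W) (ε : ZMod 2) :
    prm cs (cs.wordProd ω) (x, ε)
      = (cs.wordProd ω * x * (cs.wordProd ω)⁻¹,
          ε + zcount x (cs.rightInvSeq ω)) := by
  induction ω with
  | nil => simp [wordProd_nil, zcount]
  | cons a ω ih =>
    rw [cs.wordProd_cons, map_mul, Equiv.Perm.mul_apply, ih, prm_simple, refPerm_apply]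
    have hris : cs.rightInvSeq (a :: ω)
        = ((cs.wordProd ω)⁻¹ * cs.simple a * cs.wordProd ω) :: cs.rightInvSeq ω := rfl
    rw [hris]
    simp only [Prod.mk.injEq, zcount]
    constructor
    · rw [mul_inv_rev, cs.inv_simple]
      simp [mul_assoc]
    · have hcond : (cs.wordProd ω * x * (cs.wordProd ω)⁻¹ = cs.simple a)
          ↔ ((cs.wordProd ω)⁻¹ * cs.simple a * cs.wordProd ω = x) := by
        constructor
        · intro h
          rw [← h]
          group
        · intro h
          rw [← h]
          group
      simp only [hcond]
      ring

theorem zcount_rightInvSeq_eq_of_wordProd_eq {ω ω' : List B}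
    (h : cs.wordProd ω = cs.wordProd ω') (x : W) :
    zcount x (cs.rightInvSeq ω) = zcount x (cs.rightInvSeq ω') := by
  have h1 := prm_wordProd_apply cs ω x 0
  have h2 := prm_wordProd_apply cs ω' x 0
  rw [h] at h1
  have := h1.symm.trans h2
  have := congrArg Prod.snd this
  simpa using this

theorem isRightInversion_of_zcount_ne_zero {ω : List B} {x : W}
    (h : zcount x (cs.rightInvSeq ω) ≠ 0) :
    cs.IsRightInversion (cs.wordProd ω) x := by
  obtain ⟨ω', hred, hw⟩ := cs.exists_reduced_word' (cs.wordProd ω)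
  have hpar := zcount_rightInvSeq_eq_of_wordProd_eq cs hw.symm x
  rw [← hpar] at h
  have hmem : x ∈ cs.rightInvSeq ω' := mem_of_zcount_ne_zero h
  rw [hw]
  exact cs.isRightInversion_of_mem_rightInvSeq hred hmem

theorem isLeftInversion_of_zcount_ne_zero {ω : List B} {x : W}
    (h : zcount x (cs.leftInvSeq ω) ≠ 0) :
    cs.IsLeftInversion (cs.wordProd ω) x := by
  have hlr : cs.leftInvSeq ω = (cs.rightInvSeq ω.reverse).reverse := by
    rw [← cs.leftInvSeq_reverse, reverse_reverse]
  rw [hlr, zcount_reverse] at h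
  have := isRightInversion_of_zcount_ne_zero cs h
  rw [cs.wordProd_reverse] at this
  exact (cs.isRightInversion_inv_iff).mp this

/-! ### Inversion sequences of words with a letter deleted -/

theorem getD_take' {α : Type*} (L : List α) {n k : ℕ} (h : k < n) (d : α) :
    (L.take n).getD k d = L.getD k d := by
  rw [getD_eq_getElem?_getD, getD_eq_getElem?_getD, List.getElem?_take]
  simp [h]

theorem getD_leftInvSeq_take (ω : List B) {k n : ℕ} (h : k < n) :
    (cs.leftInvSeq (ω.take n)).getD k 1 = (cs.leftInvSeq ω).getD k 1 := by
  rw [cs.leftInvSeq_take, getD_take' _ h]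

theorem getD_leftInvSeq_eraseIdx_lt (l : List B) {i k : ℕ} (hk : k < i) (hil : i ≤ l.length) :
    (cs.leftInvSeq (l.eraseIdx i)).getD k 1 = (cs.leftInvSeq l).getD k 1 := by
  have htake : (l.eraseIdx i).take (k+1) = l.take (k+1) := by
    rw [eraseIdx_eq_take_drop_succ, take_append]
    rw [take_take, min_eq_left (by omega), length_take, min_eq_left hil]
    rw [show k + 1 - i = 0 by omega, take_zero, append_nil]
  calc (cs.leftInvSeq (l.eraseIdx i)).getD k 1
      = (cs.leftInvSeq ((l.eraseIdx i).take (k+1))).getD k 1 :=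
        (getD_leftInvSeq_take cs _ (by omega)).symm
    _ = (cs.leftInvSeq (l.take (k+1))).getD k 1 := by rw [htake]
    _ = (cs.leftInvSeq l).getD k 1 := getD_leftInvSeq_take cs _ (by omega)

theorem getD_leftInvSeq_eraseIdx_gt (l : List B) {i k : ℕ} (hik : i < k) (hil : i < l.length) :
    (cs.leftInvSeq (l.eraseIdx i)).getD (k-1) 1
      = (cs.leftInvSeq l).getD i 1 * (cs.leftInvSeq l).getD k 1
          * ((cs.leftInvSeq l).getD i 1)⁻¹ := by
  have hlen : (l.take i).length = i := by
    rw [length_take, min_eq_left (le_of_lt hil)]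
  have hmtake : (l.eraseIdx i).take (k-1) = (l.take k).eraseIdx i := by
    rw [eraseIdx_eq_take_drop_succ, eraseIdx_eq_take_drop_succ, take_append]
    congr 1
    · rw [take_take, min_eq_right (by omega), take_take, min_eq_left (by omega)]
    · rw [hlen]
      rw [List.drop_take]
      congr 1
      omega
  have hget : (l.eraseIdx i)[k-1]? = l[k]? := by
    rw [eraseIdx_eq_take_drop_succ]
    rw [getElem?_append_right (by rw [hlen]; omega), hlen, getElem?_drop]
    congr 1
    omega
  have hti : (cs.leftInvSeq (l.take k)).getD i 1 = (cs.leftInvSeq l).getD i 1 :=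
    getD_leftInvSeq_take cs _ hik
  have hπ : cs.wordProd ((l.take k).eraseIdx i)
      = (cs.leftInvSeq l).getD i 1 * cs.wordProd (l.take k) := by
    rw [← cs.getD_leftInvSeq_mul_wordProd (l.take k) i, hti]
  have hgen : ∀ u A S : W, u * A * S * (u * A)⁻¹ = u * (A * S * A⁻¹) * u⁻¹ := by
    intros; group
  rw [cs.getD_leftInvSeq (l.eraseIdx i) (k-1), hmtake, hget, hπ, hgen,
    ← cs.getD_leftInvSeq l k]

/-- Core uniqueness argument: three distinct deletions cannot all give the same product
when one of them is reduced. -/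
theorem unique_core (l : List B) {i a b : ℕ} (hi : i < l.length) (ha : a < l.length)
    (hb : b < l.length) (hai : a ≠ i) (hbi : b ≠ i) (hab : a ≠ b)
    (hred : cs.IsReduced (l.eraseIdx i))
    (hwa : cs.wordProd (l.eraseIdx a) = cs.wordProd (l.eraseIdx i))
    (hwb : cs.wordProd (l.eraseIdx b) = cs.wordProd (l.eraseIdx i)) : False := by
  have hta : (cs.leftInvSeq l).getD a 1 = (cs.leftInvSeq l).getD i 1 := by
    have h1 := cs.getD_leftInvSeq_mul_wordProd l a
    have h2 := cs.getD_leftInvSeq_mul_wordProd l i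
    apply mul_right_cancel (b := cs.wordProd l)
    rw [h1, h2, hwa]
  have htb : (cs.leftInvSeq l).getD b 1 = (cs.leftInvSeq l).getD i 1 := by
    have h1 := cs.getD_leftInvSeq_mul_wordProd l b
    have h2 := cs.getD_leftInvSeq_mul_wordProd l i
    apply mul_right_cancel (b := cs.wordProd l)
    rw [h1, h2, hwb]
  have htirefl : cs.IsReflection ((cs.leftInvSeq l).getD i 1) := by
    apply cs.isReflection_of_mem_leftInvSeq l
    rw [List.getD_eq_getElem _ _ (by rw [cs.length_leftInvSeq]; omega)]
    exact List.getElem_mem _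
  have hval : ∀ k, k < l.length → k ≠ i → (cs.leftInvSeq l).getD k 1 = (cs.leftInvSeq l).getD i 1 →
      (cs.leftInvSeq (l.eraseIdx i)).getD (if k < i then k else k - 1) 1
        = (cs.leftInvSeq l).getD i 1 := by
    intro k hk hki htk
    by_cases hlt : k < i
    · rw [if_pos hlt, getD_leftInvSeq_eraseIdx_lt cs l hlt (le_of_lt hi), htk]
    · have hgt : i < k := by omega
      rw [if_neg hlt, getD_leftInvSeq_eraseIdx_gt cs l hgt hi, htk, htirefl.inv,
        htirefl.mul_self, one_mul]
  have hva := hval a ha hai hta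
  have hvb := hval b hb hbi htb
  have hlenm : (l.eraseIdx i).length = l.length - 1 := by
    rw [← List.length_eraseIdx_add_one hi]
    omega
  have hbound : ∀ k, k < l.length → k ≠ i →
      (if k < i then k else k - 1) < (cs.leftInvSeq (l.eraseIdx i)).length := by
    intro k hk hki
    rw [cs.length_leftInvSeq, hlenm]
    split <;> omega
  have hnodup := hred.nodup_leftInvSeq
  have hne : (if a < i then a else a - 1) ≠ (if b < i then b else b - 1) := by
    split <;> split <;> omega
  apply hne
  have hga := (List.getD_eq_getElem _ 1 (hbound a ha hai)).symm.trans hva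
  have hgb := (List.getD_eq_getElem _ 1 (hbound b hb hbi)).symm.trans hvb
  have hgab := hga.trans hgb.symm
  exact (hnodup.getElem_inj_iff).mp hgab

end CoxDel

open CoxDel List in
/-- **Deletion/defect lemma for Coxeter groups.**
If deleting the `i`-th letter of the word `l` yields a reduced word for `w`, but `l` itself
is not reduced, then there is a unique index `j ≠ i` whose deletion yields a reduced word,
and moreover that word is again a reduced word for `w`. -/
theorem unique_deletion_of_defect {B : Type*} {W : Type*} [Group W] {M : CoxeterMatrix B}
    (cs : CoxeterSystem M W) (w : W) (l : List B) (i : ℕ) (hi : i < l.length)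
    (hredi : cs.IsReduced (l.eraseIdx i)) (hprodi : cs.wordProd (l.eraseIdx i) = w)
    (hnot : ¬ cs.IsReduced l) :
    ∃! j : ℕ, j ≠ i ∧ j < l.length ∧ cs.IsReduced (l.eraseIdx j) ∧
      cs.wordProd (l.eraseIdx j) = w := by
  classical
  set t := (cs.leftInvSeq l).getD i 1 with ht
  have hlis : (cs.leftInvSeq l).length = l.length := cs.length_leftInvSeq l
  have hielem : (cs.leftInvSeq l)[i]'(by omega) = t := by
    rw [ht, List.getD_eq_getElem _ _ (by omega)]
  have htmem : t ∈ cs.leftInvSeq l := by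
    rw [← hielem]; exact List.getElem_mem _
  have htrefl := cs.isReflection_of_mem_leftInvSeq l htmem
  have h1 : t * cs.wordProd l = w := by
    rw [ht, cs.getD_leftInvSeq_mul_wordProd, hprodi]
  have hπl : cs.wordProd l = t * w := by
    rw [← h1, ← mul_assoc, htrefl.mul_self, one_mul]
  have hELen : (l.eraseIdx i).length = l.length - 1 := by
    rw [← List.length_eraseIdx_add_one hi]; omega
  have hlw : cs.length w = l.length - 1 := by
    rw [← hprodi, hredi, hELen]
  have hne1 : cs.length (cs.wordProd l) ≠ l.length := hnot
  have hne2 : cs.length (cs.wordProd l) ≠ cs.length w := by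
    rw [hπl]; exact htrefl.length_mul_right_ne w
  have hle : cs.length (cs.wordProd l) ≤ l.length := cs.length_wordProd_le l
  have hlt : cs.length (cs.wordProd l) < cs.length w := by omega
  have hnotinv : ¬ cs.IsLeftInversion (cs.wordProd l) t := by
    rintro ⟨-, hcon⟩
    rw [h1] at hcon
    omega
  have hz : zcount t (cs.leftInvSeq l) = 0 := by
    by_contra hzc
    exact hnotinv (isLeftInversion_of_zcount_ne_zero cs hzc)
  -- find a second index `j` with the same inversion
  obtain ⟨j, hji, hjlen, hjt⟩ : ∃ j, j ≠ i ∧ j < l.length ∧ (cs.leftInvSeq l).getD j 1 = t := by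
    set L := cs.leftInvSeq l with hL
    have hsplit : L = L.take i ++ L[i]'(by omega) :: L.drop (i+1) := by
      conv_lhs => rw [← List.take_append_drop i L]
      congr 1
      rw [List.drop_eq_getElem_cons (by omega)]
    have hcount : zcount t L = zcount t (L.take i) + (1 + zcount t (L.drop (i+1))) := by
      conv_lhs => rw [hsplit]
      rw [zcount_append]
      congr 1
      show ((if L[i]'(by omega) = t then (1 : ZMod 2) else 0) + zcount t (L.drop (i+1))) = _
      rw [if_pos hielem]
    rw [hz] at hcount
    have hor : zcount t (L.take i) ≠ 0 ∨ zcount t (L.drop (i+1)) ≠ 0 := by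
      by_contra hcon
      push_neg at hcon
      rw [hcon.1, hcon.2] at hcount
      simp at hcount
    rcases hor with h | h
    · obtain ⟨k, hk, hkt⟩ := List.getElem_of_mem (mem_of_zcount_ne_zero h)
      have hki : k < i := by
        have := hk
        rw [List.length_take] at this
        omega
      refine ⟨k, by omega, by omega, ?_⟩
      rw [List.getD_eq_getElem _ _ (by omega), ← hkt, List.getElem_take]
    · obtain ⟨k, hk, hkt⟩ := List.getElem_of_mem (mem_of_zcount_ne_zero h)
      have hkL : i + 1 + k < L.length := by
        have := hk
        rw [List.length_drop] at this
        omega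
      refine ⟨i + 1 + k, by omega, by omega, ?_⟩
      rw [List.getD_eq_getElem _ _ (by omega), ← hkt, List.getElem_drop]
  have hprodj : cs.wordProd (l.eraseIdx j) = w := by
    rw [← cs.getD_leftInvSeq_mul_wordProd l j, hjt, h1]
  have hredj : cs.IsReduced (l.eraseIdx j) := by
    show cs.length (cs.wordProd (l.eraseIdx j)) = (l.eraseIdx j).length
    rw [hprodj, hlw, ← List.length_eraseIdx_add_one hjlen]
    omega
  refine ⟨j, ⟨hji, hjlen, hredj, hprodj⟩, ?_⟩
  rintro y ⟨hyi, hylen, -, hyw⟩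
  by_contra hyj
  exact unique_core cs l hi hylen hjlen hyi hji hyj hredi
    (hyw.trans hprodi.symm) (hprodj.trans hprodi.symm)
end

section
/- Let w be a signed permutation that is not increasing (i.e. it is not the case that w(1) < w(2) < ⋯). Let (r,s) be the lexicographically largest pair of positive integers with w(r) > w(s), and set v = w·t_{rs}. Then ℓ(v) = ℓ(w) − 1. -/
/-- The signed transposition `t_{i,j}`, interchanging `i ↔ j` and `-i ↔ -j`. -/
def sT (i j : ℤ) : Equiv.Perm ℤ :=
  if j = -i then Equiv.swap i j else Equiv.swap i j * Equiv.swap (-i) (-j)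

/-- The Coxeter generators of `B_∞`: `sgen 0 = t_{-1,1}` and `sgen i = t_{i,i+1}` for `i ≥ 1`. -/
def sgen : ℕ → Equiv.Perm ℤ
  | 0 => sT (-1) 1
  | n + 1 => sT ((n : ℤ) + 1) ((n : ℤ) + 2)

/-- A signed permutation in `B_∞`: it satisfies `w(-i) = -w(i)` and fixes all sufficiently
large integers. -/
def IsSignedPerm (w : Equiv.Perm ℤ) : Prop :=
  (∀ i : ℤ, w (-i) = - w i) ∧ ∃ N : ℤ, ∀ i : ℤ, N ≤ i → w i = i

/-- The Coxeter length of a signed permutation: the minimal length of a word in the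
generators `sgen` whose product is `w`. -/
noncomputable def blength (w : Equiv.Perm ℤ) : ℕ :=
  sInf {p | ∃ l : List ℕ, (l.map sgen).prod = w ∧ l.length = p}

/-- The set `R(w)` of reduced words for `w`. -/
def bReduced (w : Equiv.Perm ℤ) : Set (List ℕ) :=
  {l | (l.map sgen).prod = w ∧ l.length = blength w}

lemma sT_eval {r s : ℤ} (hr : 0 < r) (hrs : r < s) (x : ℤ) :
    sT r s x = if x = r then s else if x = s then r else
      if x = -r then -s else if x = -s then -r else x := by
  unfold sT
  rw [if_neg (by omega)]
  simp only [Equiv.Perm.mul_apply, Equiv.swap_apply_def]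
  split_ifs <;> omega

lemma sT0_eval (x : ℤ) :
    sT (-1) 1 x = if x = 1 then -1 else if x = -1 then 1 else x := by
  unfold sT
  rw [if_pos (by norm_num)]
  simp only [Equiv.swap_apply_def]
  split_ifs <;> omega

lemma sT_neg {r s : ℤ} (hr : 0 < r) (hrs : r < s) (x : ℤ) :
    sT r s (-x) = -(sT r s x) := by
  simp only [sT_eval hr hrs]
  split_ifs <;> omega

lemma sT_invol {r s : ℤ} (hr : 0 < r) (hrs : r < s) (x : ℤ) :
    sT r s (sT r s x) = x := by
  simp only [sT_eval hr hrs]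
  split_ifs <;> omega

lemma sT0_neg (x : ℤ) : sT (-1) 1 (-x) = -(sT (-1) 1 x) := by
  simp only [sT0_eval]; split_ifs <;> omega

lemma sT0_invol (x : ℤ) : sT (-1) 1 (sT (-1) 1 x) = x := by
  rw [sT0_eval (sT (-1) 1 x), sT0_eval x]
  split_ifs <;> first | omega | exact (‹False›).elim

lemma sT_mul_self {r s : ℤ} (hr : 0 < r) (hrs : r < s) : sT r s * sT r s = 1 :=
  Equiv.ext fun x => sT_invol hr hrs x

lemma sT0_mul_self : sT (-1) 1 * sT (-1) 1 = 1 :=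
  Equiv.ext fun x => sT0_invol x

lemma isp_one : IsSignedPerm 1 := ⟨fun i => rfl, 0, fun i _ => rfl⟩

lemma isp_mul {w u : Equiv.Perm ℤ} (hw : IsSignedPerm w) (hu : IsSignedPerm u) :
    IsSignedPerm (w * u) := by
  obtain ⟨hw1, Nw, hw2⟩ := hw
  obtain ⟨hu1, Nu, hu2⟩ := hu
  refine ⟨fun i => ?_, max Nw Nu, fun i hi => ?_⟩
  · simp [Equiv.Perm.mul_apply, hu1, hw1]
  · simp only [Equiv.Perm.mul_apply]
    rw [hu2 i (le_trans (le_max_right _ _) hi), hw2 i (le_trans (le_max_left _ _) hi)]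

lemma isp_sT {r s : ℤ} (hr : 0 < r) (hrs : r < s) : IsSignedPerm (sT r s) := by
  refine ⟨sT_neg hr hrs, s + 1, fun i hi => ?_⟩
  simp only [sT_eval hr hrs]; split_ifs <;> omega

lemma isp_sT0 : IsSignedPerm (sT (-1) 1) := by
  refine ⟨sT0_neg, 2, fun i hi => ?_⟩
  simp only [sT0_eval]; split_ifs <;> omega

lemma isp_sgen (n : ℕ) : IsSignedPerm (sgen n) := by
  cases n with
  | zero => exact isp_sT0
  | succ n =>
    show IsSignedPerm (sT ((n : ℤ) + 1) ((n : ℤ) + 2))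
    exact isp_sT (by omega) (by omega)

lemma signed_zero {w : Equiv.Perm ℤ} (hw : IsSignedPerm w) : w 0 = 0 := by
  have := hw.1 0
  simp only [neg_zero] at this
  omega

/-- The type-B inversion set. -/
def bInv (w : Equiv.Perm ℤ) : Set (ℤ × ℤ) :=
  {p | p.1 < p.2 ∧ 0 < p.1 + p.2 ∧ w p.2 < w p.1}

noncomputable def bL (w : Equiv.Perm ℤ) : ℕ := (bInv w).ncard

def bRho (p : ℤ × ℤ) : ℤ × ℤ :=
  if 0 < p.1 + p.2 then (min p.1 p.2, max p.1 p.2)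
  else (min (-p.1) (-p.2), max (-p.1) (-p.2))

def bSig (t : ℤ → ℤ) (p : ℤ × ℤ) : ℤ × ℤ := bRho (t p.1, t p.2)

def bTau (r s : ℤ) (p : ℤ × ℤ) : ℤ × ℤ :=
  if (p.1 = r ∧ p.2 < s) ∨ (p.2 = s ∧ r < p.1) then p else bSig (fun x => sT r s x) p

lemma bRho_window {a b : ℤ} (h1 : a ≠ b) (h2 : a ≠ -b) :
    (bRho (a, b)).1 < (bRho (a, b)).2 ∧ 0 < (bRho (a, b)).1 + (bRho (a, b)).2 := by
  unfold bRho
  split_ifs <;> simp only [min_def, max_def] <;> split_ifs <;> constructor <;> omega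

lemma bRho_fix {p : ℤ × ℤ} (h1 : p.1 < p.2) (h2 : 0 < p.1 + p.2) : bRho p = p := by
  unfold bRho
  rw [if_pos h2, min_eq_left h1.le, max_eq_right h1.le]

lemma bRho_swap (a b : ℤ) : bRho (a, b) = bRho (b, a) := by
  unfold bRho
  split_ifs <;> simp only [Prod.mk.injEq, min_def, max_def] <;> split_ifs <;>
    first | omega | (constructor <;> omega)

lemma bRho_neg (a b : ℤ) : bRho (-a, -b) = bRho (a, b) := by
  unfold bRho
  simp only [neg_neg]
  split_ifs <;> simp only [Prod.mk.injEq, min_def, max_def] <;> split_ifs <;>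
    constructor <;> omega

lemma bRho_cases (a b : ℤ) :
    bRho (a, b) = (a, b) ∨ bRho (a, b) = (b, a) ∨
    bRho (a, b) = (-a, -b) ∨ bRho (a, b) = (-b, -a) := by
  unfold bRho
  split_ifs <;> simp only [Prod.mk.injEq, min_def, max_def] <;> split_ifs <;> omega

lemma bRho_mem {w : Equiv.Perm ℤ} (hw : IsSignedPerm w) {a b : ℤ}
    (h1 : a ≠ b) (h2 : a ≠ -b) :
    bRho (a, b) ∈ bInv w ↔ (if a < b then w b < w a else w a < w b) := by
  by_cases hs : 0 < a + b <;> by_cases hl : a < b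
  · rw [if_pos hl]
    unfold bRho bInv
    rw [if_pos hs, min_eq_left hl.le, max_eq_right hl.le]
    simp only [Set.mem_setOf_eq]
    tauto
  · rw [if_neg hl]
    have hl' : b < a := by omega
    unfold bRho bInv
    rw [if_pos hs, min_eq_right hl'.le, max_eq_left hl'.le]
    simp only [Set.mem_setOf_eq]
    constructor
    · tauto
    · intro h; exact ⟨hl', by omega, h⟩
  · rw [if_pos hl]
    unfold bRho bInv
    rw [if_neg hs, min_eq_right (by omega : -b ≤ -a), max_eq_left (by omega : -b ≤ -a)]
    simp only [Set.mem_setOf_eq, hw.1]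
    constructor
    · intro h; omega
    · intro h; refine ⟨by omega, by omega, by omega⟩
  · rw [if_neg hl]
    unfold bRho bInv
    rw [if_neg hs, min_eq_left (by omega : -a ≤ -b), max_eq_right (by omega : -a ≤ -b)]
    simp only [Set.mem_setOf_eq, hw.1]
    constructor
    · intro h; omega
    · intro h; refine ⟨by omega, by omega, by omega⟩

section sigma

variable {t : ℤ → ℤ} (ht1 : ∀ x, t (-x) = -t x) (ht2 : ∀ x, t (t x) = x)

include ht2 in
lemma t_inj {x y : ℤ} (h : t x = t y) : x = y := by
  have := congrArg t h
  rwa [ht2, ht2] at this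

include ht1 ht2 in
lemma bSig_invol {p : ℤ × ℤ} (hp1 : p.1 < p.2) (hp2 : 0 < p.1 + p.2) :
    bSig t (bSig t p) = p := by
  have ha : t p.1 ≠ t p.2 := fun h => by have := t_inj ht2 h; omega
  have hb : t p.1 ≠ -t p.2 := fun h => by
    have : t p.1 = t (-p.2) := by rw [ht1]; exact h
    have := t_inj ht2 this; omega
  have hfix : bRho (p.1, p.2) = p := bRho_fix hp1 hp2
  rcases bRho_cases (t p.1) (t p.2) with h | h | h | h <;>
    · unfold bSig
      rw [h]
      simp only [ht1, ht2]
      first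
      | rw [hfix]
      | rw [bRho_swap, hfix]
      | rw [bRho_neg, hfix]
      | rw [bRho_swap, bRho_neg, hfix]

end sigma

section tau

variable {r s : ℤ}

lemma sT_at_r (hr : 0 < r) (hrs : r < s) : sT r s r = s := by
  rw [sT_eval hr hrs]; split_ifs <;> omega

lemma sT_at_s (hr : 0 < r) (hrs : r < s) : sT r s s = r := by
  rw [sT_eval hr hrs]; split_ifs <;> omega

lemma sT_mid (hr : 0 < r) (hrs : r < s) {k : ℤ} (h1 : r < k) (h2 : k < s) :
    sT r s k = k := by
  rw [sT_eval hr hrs]; split_ifs <;> omega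

lemma sT_noflip (hr : 0 < r) (hrs : r < s) {p : ℤ × ℤ} (hp1 : p.1 < p.2)
    (hp2 : 0 < p.1 + p.2)
    (hF : ¬((p.1 = r ∧ p.2 < s) ∨ (p.2 = s ∧ r < p.1)))
    (hps : ¬(p.1 = r ∧ p.2 = s)) :
    sT r s p.1 < sT r s p.2 := by
  rw [sT_eval hr hrs p.1, sT_eval hr hrs p.2]
  split_ifs <;> omega

lemma bTau_window (hr : 0 < r) (hrs : r < s) {p : ℤ × ℤ} (hp1 : p.1 < p.2)
    (hp2 : 0 < p.1 + p.2) :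
    (bTau r s p).1 < (bTau r s p).2 ∧ 0 < (bTau r s p).1 + (bTau r s p).2 := by
  unfold bTau
  split_ifs with h
  · exact ⟨hp1, hp2⟩
  · apply bRho_window
    · intro hc; have := t_inj (sT_invol hr hrs) hc; omega
    · intro hc
      rw [← sT_neg hr hrs] at hc
      have := t_inj (sT_invol hr hrs) hc; omega

lemma bTau_invol (hr : 0 < r) (hrs : r < s) {p : ℤ × ℤ} (hp1 : p.1 < p.2)
    (hp2 : 0 < p.1 + p.2) :
    bTau r s (bTau r s p) = p := by
  by_cases hF : (p.1 = r ∧ p.2 < s) ∨ (p.2 = s ∧ r < p.1)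
  · unfold bTau; rw [if_pos hF, if_pos hF]
  · have hkey : bSig (fun x => sT r s x) (bSig (fun x => sT r s x) p) = p :=
      bSig_invol (sT_neg hr hrs) (sT_invol hr hrs) hp1 hp2
    set q := bSig (fun x => sT r s x) p with hq
    have hqw : q.1 < q.2 ∧ 0 < q.1 + q.2 := by
      have := bTau_window hr hrs hp1 hp2 (p := p)
      unfold bTau at this
      rwa [if_neg hF] at this
    have hqF : ¬((q.1 = r ∧ q.2 < s) ∨ (q.2 = s ∧ r < q.1)) := by
      rintro (⟨h1, h2⟩ | ⟨h1, h2⟩)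
      · -- q = (r, q.2) with r < q.2 < s ; then p = bSig q = (q.2, s)
        have hmid : r < q.2 := h1 ▸ hqw.1
        have hp' : p = (q.2, s) := by
          rw [← hkey]
          show bRho (sT r s q.1, sT r s q.2) = (q.2, s)
          rw [h1, sT_at_r hr hrs, sT_mid hr hrs hmid h2]
          unfold bRho
          rw [if_pos (by omega), min_eq_right (by omega), max_eq_left (by omega)]
        apply hF
        right
        rw [hp']
        exact ⟨rfl, hmid⟩
      · have hmid : q.1 < s := h1 ▸ hqw.1
        have hp' : p = (r, q.1) := by
          rw [← hkey]
          show bRho (sT r s q.1, sT r s q.2) = (r, q.1)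
          rw [h1, sT_at_s hr hrs, sT_mid hr hrs h2 hmid]
          unfold bRho
          rw [if_pos (by omega), min_eq_right (by omega), max_eq_left (by omega)]
        apply hF
        left
        rw [hp']
        exact ⟨rfl, hmid⟩
    show bTau r s (bTau r s p) = p
    unfold bTau
    rw [if_neg hF, if_neg hqF]
    exact hkey

end tau

lemma mem_bInv_mul {w : Equiv.Perm ℤ} (hw : IsSignedPerm w) {r s : ℤ}
    (hr : 0 < r) (hrs : r < s) (hd : w s < w r)
    (nm : ∀ k, r < k → k < s → ¬(w s < w k ∧ w k < w r))
    {p : ℤ × ℤ} (hp1 : p.1 < p.2) (hp2 : 0 < p.1 + p.2) :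
    p ∈ bInv (w * sT r s) ↔ (bTau r s p ∈ bInv w ∧ bTau r s p ≠ (r, s)) := by
  have winj := w.injective
  by_cases hF : (p.1 = r ∧ p.2 < s) ∨ (p.2 = s ∧ r < p.1)
  · have hτ : bTau r s p = p := by unfold bTau; rw [if_pos hF]
    rw [hτ]
    rcases hF with ⟨h1, h2⟩ | ⟨h1, h2⟩
    · -- p = (r, k) with r < k < s
      have hk1 : r < p.2 := h1 ▸ hp1
      have e1 : sT r s p.1 = s := by rw [h1]; exact sT_at_r hr hrs
      have e2 : sT r s p.2 = p.2 := sT_mid hr hrs hk1 h2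
      have hnes : w p.2 ≠ w s := fun h => by have := winj h; omega
      have hner : w p.2 ≠ w r := fun h => by have := winj h; omega
      have hnm := nm p.2 hk1 h2
      simp only [bInv, Set.mem_setOf_eq, Equiv.Perm.mul_apply, e1, e2]
      constructor
      · rintro ⟨_, _, h3⟩
        refine ⟨⟨hp1, hp2, by rw [h1]; omega⟩, ?_⟩
        intro hc; rw [hc] at h2; omega
      · rintro ⟨⟨_, _, h3⟩, _⟩
        rw [h1] at h3
        exact ⟨hp1, hp2, by omega⟩
    · -- p = (k, s) with r < k < s
      have hk2 : p.1 < s := h1 ▸ hp1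
      have e1 : sT r s p.1 = p.1 := sT_mid hr hrs h2 hk2
      have e2 : sT r s p.2 = r := by rw [h1]; exact sT_at_s hr hrs
      have hnes : w p.1 ≠ w s := fun h => by have := winj h; omega
      have hner : w p.1 ≠ w r := fun h => by have := winj h; omega
      have hnm := nm p.1 h2 hk2
      simp only [bInv, Set.mem_setOf_eq, Equiv.Perm.mul_apply, e1, e2]
      constructor
      · rintro ⟨_, _, h3⟩
        refine ⟨⟨hp1, hp2, by rw [h1]; omega⟩, ?_⟩
        intro hc
        have : p.1 = r := by rw [hc]
        omega
      · rintro ⟨⟨_, _, h3⟩, _⟩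
        rw [h1] at h3
        exact ⟨hp1, hp2, by omega⟩
  · have hτ : bTau r s p = bRho (sT r s p.1, sT r s p.2) := by
      unfold bTau; rw [if_neg hF]; rfl
    by_cases hps : p.1 = r ∧ p.2 = s
    · have e1 : sT r s p.1 = s := by rw [hps.1]; exact sT_at_r hr hrs
      have e2 : sT r s p.2 = r := by rw [hps.2]; exact sT_at_s hr hrs
      have hρ : bTau r s p = (r, s) := by
        rw [hτ, e1, e2]
        unfold bRho
        rw [if_pos (by omega), min_eq_right (by omega), max_eq_left (by omega)]
      constructor
      · rintro ⟨_, _, h3⟩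
        rw [Equiv.Perm.mul_apply, Equiv.Perm.mul_apply, e1, e2] at h3
        omega
      · rintro ⟨_, hne⟩
        exact absurd hρ hne
    · have hlt : sT r s p.1 < sT r s p.2 := sT_noflip hr hrs hp1 hp2 hF hps
      have hb : sT r s p.1 ≠ -sT r s p.2 := by
        intro hc
        rw [← sT_neg hr hrs] at hc
        have := t_inj (sT_invol hr hrs) hc
        omega
      have hmemiff := bRho_mem hw (ne_of_lt hlt) hb
      rw [if_pos hlt] at hmemiff
      have hne : bRho (sT r s p.1, sT r s p.2) ≠ (r, s) := by
        intro hc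
        have getp : ∀ x y : ℤ, sT r s x = y → x = sT r s y := by
          intro x y hxy; rw [← hxy, sT_invol hr hrs]
        rcases bRho_cases (sT r s p.1) (sT r s p.2) with h | h | h | h <;>
            rw [h, Prod.mk.injEq] at hc
        · have a1 := getp _ _ hc.1
          have a2 := getp _ _ hc.2
          rw [sT_at_r hr hrs] at a1
          rw [sT_at_s hr hrs] at a2
          omega
        · have a1 := getp _ _ hc.1
          have a2 := getp _ _ hc.2
          rw [sT_at_s hr hrs] at a2
          rw [sT_at_r hr hrs] at a1
          omega
        · have a1 := getp _ _ (by omega : sT r s p.1 = -r)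
          have a2 := getp _ _ (by omega : sT r s p.2 = -s)
          rw [show sT r s (-r) = -s by rw [sT_neg hr hrs, sT_at_r hr hrs]] at a1
          rw [show sT r s (-s) = -r by rw [sT_neg hr hrs, sT_at_s hr hrs]] at a2
          omega
        · have a1 := getp _ _ (by omega : sT r s p.1 = -s)
          have a2 := getp _ _ (by omega : sT r s p.2 = -r)
          rw [show sT r s (-s) = -r by rw [sT_neg hr hrs, sT_at_s hr hrs]] at a1
          rw [show sT r s (-r) = -s by rw [sT_neg hr hrs, sT_at_r hr hrs]] at a2
          omega
      rw [hτ]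
      simp only [bInv, Set.mem_setOf_eq, Equiv.Perm.mul_apply]
      constructor
      · rintro ⟨_, _, h3⟩
        exact ⟨hmemiff.mpr h3, hne⟩
      · rintro ⟨hm, _⟩
        exact ⟨hp1, hp2, hmemiff.mp hm⟩

lemma signed_bound {w : Equiv.Perm ℤ} (hw : IsSignedPerm w) :
    ∃ N : ℤ, 1 ≤ N ∧ (∀ x : ℤ, N ≤ x ∨ x ≤ -N → w x = x) ∧
      (∀ x : ℤ, -N < x → x < N → -N < w x ∧ w x < N) := by
  obtain ⟨h1, N0, h2⟩ := hw
  refine ⟨max N0 1, le_max_right _ _, fun x hx => ?_, fun x hx1 hx2 => ?_⟩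
  · rcases hx with hx | hx
    · exact h2 x (le_trans (le_max_left _ _) hx)
    · have : w (-(-x)) = -w (-x) := h1 (-x)
      rw [neg_neg] at this
      rw [this, h2 (-x) (by omega)]
      omega
  · by_contra hc
    have hbig : w (w x) = w x := by
      rcases (by omega : max N0 1 ≤ w x ∨ w x ≤ -(max N0 1)) with h | h
      · exact h2 _ (le_trans (le_max_left _ _) h)
      · have : w (-(- w x)) = - w (- w x) := h1 (-w x)
        rw [neg_neg] at this
        rw [this, h2 (- w x) (by omega)]
        omega
    have := w.injective hbig
    omega

lemma bInv_finite {w : Equiv.Perm ℤ} (hw : IsSignedPerm w) : (bInv w).Finite := by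
  obtain ⟨N, hN1, hbig, hsmall⟩ := signed_bound hw
  apply Set.Finite.subset ((Set.finite_Icc (-N) N).prod (Set.finite_Icc (-N) N))
  rintro ⟨a, b⟩ ⟨h1, h2, h3⟩
  simp only [Set.mem_prod, Set.mem_Icc]
  dsimp only at h1 h2 h3
  have hb : b < N := by
    by_contra hc
    push_neg at hc
    have hwb : w b = b := hbig b (Or.inl hc)
    rcases (by omega : (-N < a ∧ a < N) ∨ N ≤ a ∨ a ≤ -N) with ⟨u1, u2⟩ | h | h
    · have := hsmall a u1 u2; omega
    · have := hbig a (Or.inl h); omega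
    · have := hbig a (Or.inr h); omega
  omega

lemma bInv_one : bInv (1 : Equiv.Perm ℤ) = ∅ := by
  ext p
  simp only [bInv, Set.mem_setOf_eq, Equiv.Perm.one_apply, Set.mem_empty_iff_false,
    iff_false]
  omega

lemma bL_mul_sT {w : Equiv.Perm ℤ} (hw : IsSignedPerm w) {r s : ℤ}
    (hr : 0 < r) (hrs : r < s) (hd : w s < w r)
    (nm : ∀ k, r < k → k < s → ¬(w s < w k ∧ w k < w r)) :
    bL (w * sT r s) + 1 = bL w := by
  have himg : bInv (w * sT r s) = bTau r s '' (bInv w \ {(r, s)}) := by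
    ext p
    constructor
    · intro hp
      have hp1 : p.1 < p.2 := hp.1
      have hp2 : 0 < p.1 + p.2 := hp.2.1
      have := (mem_bInv_mul hw hr hrs hd nm hp1 hp2).mp hp
      refine ⟨bTau r s p, ⟨this.1, this.2⟩, bTau_invol hr hrs hp1 hp2⟩
    · rintro ⟨q, ⟨hq1, hq2⟩, rfl⟩
      have hqw1 : q.1 < q.2 := hq1.1
      have hqw2 : 0 < q.1 + q.2 := hq1.2.1
      have hτw := bTau_window hr hrs hqw1 hqw2
      apply (mem_bInv_mul hw hr hrs hd nm hτw.1 hτw.2).mpr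
      rw [bTau_invol hr hrs hqw1 hqw2]
      exact ⟨hq1, fun hc => hq2 (by simp [hc])⟩
  have hfin : (bInv w).Finite := bInv_finite hw
  have hmem : (r, s) ∈ bInv w := ⟨hrs, by dsimp; omega, hd⟩
  have hinjOn : Set.InjOn (bTau r s) (bInv w \ {(r, s)}) := by
    intro x hx y hy hxy
    have hx1 : x.1 < x.2 := hx.1.1
    have hx2 : 0 < x.1 + x.2 := hx.1.2.1
    have hy1 : y.1 < y.2 := hy.1.1
    have hy2 : 0 < y.1 + y.2 := hy.1.2.1
    have := congrArg (bTau r s) hxy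
    rwa [bTau_invol hr hrs hx1 hx2, bTau_invol hr hrs hy1 hy2] at this
  have h1 : bL (w * sT r s) = (bInv w \ {(r, s)}).ncard := by
    rw [bL, himg, Set.ncard_image_of_injOn hinjOn]
  rw [h1, bL]
  exact Set.ncard_diff_singleton_add_one hmem hfin

lemma sT0_at (x : ℤ) : sT (-1) 1 0 = 0 ∧ sT (-1) 1 1 = -1 ∧ sT (-1) 1 (-1) = 1 := by
  refine ⟨?_, ?_, ?_⟩ <;> (rw [sT0_eval]; norm_num)

lemma mem_bInv_mul0 {w : Equiv.Perm ℤ} (hw : IsSignedPerm w) (hd : w 1 < 0)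
    {p : ℤ × ℤ} (hp1 : p.1 < p.2) (hp2 : 0 < p.1 + p.2) :
    p ∈ bInv (w * sT (-1) 1) ↔
      (bSig (fun x => sT (-1) 1 x) p ∈ bInv w ∧
        bSig (fun x => sT (-1) 1 x) p ≠ (0, 1)) := by
  have winj := w.injective
  have hw0 : w 0 = 0 := signed_zero hw
  by_cases hps : p.1 = 0 ∧ p.2 = 1
  · have e1 : sT (-1) 1 p.1 = 0 := by rw [hps.1]; exact (sT0_at 0).1
    have e2 : sT (-1) 1 p.2 = -1 := by rw [hps.2]; exact (sT0_at 0).2.1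
    have hρ : bSig (fun x => sT (-1) 1 x) p = (0, 1) := by
      show bRho (sT (-1) 1 p.1, sT (-1) 1 p.2) = (0, 1)
      rw [e1, e2]
      unfold bRho
      rw [if_neg (by omega)]
      norm_num
    constructor
    · rintro ⟨_, _, h3⟩
      rw [Equiv.Perm.mul_apply, Equiv.Perm.mul_apply, e1, e2] at h3
      have := hw.1 1
      omega
    · rintro ⟨_, hne⟩
      exact absurd hρ hne
  · have hlt : sT (-1) 1 p.1 < sT (-1) 1 p.2 := by
      rw [sT0_eval p.1, sT0_eval p.2]
      split_ifs <;> omega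
    have hb : sT (-1) 1 p.1 ≠ -sT (-1) 1 p.2 := by
      intro hc
      rw [← sT0_neg] at hc
      have := t_inj sT0_invol hc
      omega
    have hmemiff := bRho_mem hw (ne_of_lt hlt) hb
    rw [if_pos hlt] at hmemiff
    have hne : bRho (sT (-1) 1 p.1, sT (-1) 1 p.2) ≠ (0, 1) := by
      intro hc
      have getp : ∀ x y : ℤ, sT (-1) 1 x = y → x = sT (-1) 1 y := by
        intro x y hxy; rw [← hxy, sT0_invol]
      rcases bRho_cases (sT (-1) 1 p.1) (sT (-1) 1 p.2) with h | h | h | h <;>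
          rw [h, Prod.mk.injEq] at hc
      · have a2 := getp _ _ hc.2
        rw [(sT0_at 0).2.1] at a2
        omega
      · omega
      · have a1 := getp _ _ (by omega : sT (-1) 1 p.1 = 0)
        have a2 := getp _ _ (by omega : sT (-1) 1 p.2 = -1)
        rw [(sT0_at 0).1] at a1
        rw [show sT (-1) 1 (-1) = 1 from (sT0_at 0).2.2] at a2
        exact hps ⟨a1, a2⟩
      · have a2 := getp _ _ (by omega : sT (-1) 1 p.2 = 0)
        rw [(sT0_at 0).1] at a2
        omega
    show _ ↔ (bRho (sT (-1) 1 p.1, sT (-1) 1 p.2) ∈ bInv w ∧ _)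
    simp only [bInv, Set.mem_setOf_eq, Equiv.Perm.mul_apply]
    constructor
    · rintro ⟨_, _, h3⟩
      exact ⟨hmemiff.mpr h3, hne⟩
    · rintro ⟨hm, _⟩
      exact ⟨hp1, hp2, hmemiff.mp hm⟩

lemma bL_mul_sT0 {w : Equiv.Perm ℤ} (hw : IsSignedPerm w) (hd : w 1 < 0) :
    bL (w * sT (-1) 1) + 1 = bL w := by
  have hτw : ∀ p : ℤ × ℤ, p.1 < p.2 → 0 < p.1 + p.2 →
      (bSig (fun x => sT (-1) 1 x) p).1 < (bSig (fun x => sT (-1) 1 x) p).2 ∧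
      0 < (bSig (fun x => sT (-1) 1 x) p).1 + (bSig (fun x => sT (-1) 1 x) p).2 := by
    intro p hp1 hp2
    apply bRho_window
    · intro hc; have := t_inj sT0_invol hc; omega
    · intro hc
      rw [← sT0_neg] at hc
      have := t_inj sT0_invol hc; omega
  have hinvol : ∀ p : ℤ × ℤ, p.1 < p.2 → 0 < p.1 + p.2 →
      bSig (fun x => sT (-1) 1 x) (bSig (fun x => sT (-1) 1 x) p) = p :=
    fun p hp1 hp2 => bSig_invol sT0_neg sT0_invol hp1 hp2
  have himg : bInv (w * sT (-1) 1) =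
      bSig (fun x => sT (-1) 1 x) '' (bInv w \ {(0, 1)}) := by
    ext p
    constructor
    · intro hp
      have hp1 : p.1 < p.2 := hp.1
      have hp2 : 0 < p.1 + p.2 := hp.2.1
      have := (mem_bInv_mul0 hw hd hp1 hp2).mp hp
      exact ⟨_, ⟨this.1, this.2⟩, hinvol p hp1 hp2⟩
    · rintro ⟨q, ⟨hq1, hq2⟩, rfl⟩
      have hqw1 : q.1 < q.2 := hq1.1
      have hqw2 : 0 < q.1 + q.2 := hq1.2.1
      have hqw := hτw q hqw1 hqw2
      apply (mem_bInv_mul0 hw hd hqw.1 hqw.2).mpr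
      rw [hinvol q hqw1 hqw2]
      exact ⟨hq1, fun hc => hq2 (by simp [hc])⟩
  have hfin : (bInv w).Finite := bInv_finite hw
  have hmem : (0, 1) ∈ bInv w := ⟨by norm_num, by dsimp; omega, by rw [signed_zero hw]; exact hd⟩
  have hinjOn : Set.InjOn (bSig (fun x => sT (-1) 1 x)) (bInv w \ {(0, 1)}) := by
    intro x hx y hy hxy
    have := congrArg (bSig (fun x => sT (-1) 1 x)) hxy
    rwa [hinvol x hx.1.1 hx.1.2.1, hinvol y hy.1.1 hy.1.2.1] at this
  have h1 : bL (w * sT (-1) 1) = (bInv w \ {(0, 1)}).ncard := by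
    rw [bL, himg, Set.ncard_image_of_injOn hinjOn]
  rw [h1, bL]
  exact Set.ncard_diff_singleton_add_one hmem hfin

lemma eq_one_of_ascending {w : Equiv.Perm ℤ} (hw : IsSignedPerm w)
    (h0 : 0 < w 1) (hasc : ∀ i : ℤ, 1 ≤ i → w i < w (i + 1)) : w = 1 := by
  have hchain : ∀ i : ℤ, 1 ≤ i → ∀ k : ℕ, w i + k ≤ w (i + k) := by
    intro i hi k
    induction k with
    | zero => simp
    | succ m ih =>
      have h1 : w (i + m) < w (i + m + 1) := hasc (i + m) (by omega)
      have h2 : (i : ℤ) + (m + 1 : ℕ) = i + m + 1 := by push_cast; ring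
      rw [h2]
      push_cast
      push_cast at ih
      omega
  have hpos : ∀ i : ℤ, 1 ≤ i → w i = i := by
    intro i hi
    have hlow : i ≤ w i := by
      have := hchain 1 le_rfl (i - 1).toNat
      rw [show ((i - 1).toNat : ℤ) = i - 1 by omega, show (1 : ℤ) + (i - 1) = i by ring]
        at this
      omega
    obtain ⟨N0, hN0⟩ := hw.2
    set N : ℤ := max N0 i with hN
    have hwN : w N = N := hN0 N (le_max_left _ _)
    have hk := hchain i hi (N - i).toNat
    rw [show ((N - i).toNat : ℤ) = N - i by omega] at hk
    rw [show i + (N - i) = N by ring, hwN] at hk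
    omega
  apply Equiv.ext
  intro x
  simp only [Equiv.Perm.one_apply]
  rcases (by omega : 1 ≤ x ∨ x = 0 ∨ x ≤ -1) with h | h | h
  · exact hpos x h
  · rw [h]; exact signed_zero hw
  · have : w (-(-x)) = -w (-x) := hw.1 (-x)
    rw [neg_neg] at this
    rw [this, hpos (-x) (by omega)]
    omega

lemma exists_descent {w : Equiv.Perm ℤ} (hw : IsSignedPerm w)
    (hne : (bInv w).Nonempty) :
    w 1 < 0 ∨ ∃ i : ℤ, 1 ≤ i ∧ w (i + 1) < w i := by
  by_contra hcon
  push_neg at hcon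
  obtain ⟨h1, h2⟩ := hcon
  have h1' : w 1 ≠ 0 := by
    intro hc
    have : w 1 = w 0 := by rw [hc, signed_zero hw]
    have := w.injective this
    omega
  have hasc : ∀ i : ℤ, 1 ≤ i → w i < w (i + 1) := by
    intro i hi
    have hne' : w i ≠ w (i + 1) := fun hc => by have := w.injective hc; omega
    have := h2 i hi
    omega
  have : w = 1 := eq_one_of_ascending hw (by omega) hasc
  rw [this, bInv_one] at hne
  exact Set.not_nonempty_empty hne

lemma sgen_succ_eq (n : ℕ) : sgen (n + 1) = sT ((n : ℤ) + 1) ((n : ℤ) + 2) := rfl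

lemma bL_one : bL 1 = 0 := by rw [bL, bInv_one, Set.ncard_empty]

lemma bL_step {x : Equiv.Perm ℤ} (hx : IsSignedPerm x) (a : ℕ) :
    bL (x * sgen a) ≤ bL x + 1 := by
  cases a with
  | zero =>
    show bL (x * sT (-1) 1) ≤ bL x + 1
    have hx1 : x 1 ≠ 0 := by
      intro hc
      have : x 1 = x 0 := by rw [hc, signed_zero hx]
      have := x.injective this
      omega
    rcases (by omega : x 1 < 0 ∨ 0 < x 1) with h | h
    · have := bL_mul_sT0 hx h
      omega
    · have hys : IsSignedPerm (x * sT (-1) 1) := isp_mul hx isp_sT0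
      have hy1 : (x * sT (-1) 1) 1 < 0 := by
        have e : (x * sT (-1) 1) 1 = x (-1) := by
          rw [Equiv.Perm.mul_apply, (sT0_at 0).2.1]
        rw [e, show x (-1) = -x 1 from hx.1 1]
        omega
      have h2 := bL_mul_sT0 hys hy1
      rw [mul_assoc, sT0_mul_self, mul_one] at h2
      omega
  | succ n =>
    rw [sgen_succ_eq]
    set r : ℤ := (n : ℤ) + 1 with hrdef
    set s : ℤ := (n : ℤ) + 2 with hsdef
    have hr : 0 < r := by omega
    have hrs : r < s := by omega
    have hnm : ∀ (w : Equiv.Perm ℤ) (k : ℤ), r < k → k < s →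
        ¬(w s < w k ∧ w k < w r) := by intro w k h1 h2; omega
    have hne : x r ≠ x s := fun hc => by have := x.injective hc; omega
    rcases (by omega : x s < x r ∨ x r < x s) with h | h
    · have := bL_mul_sT hx hr hrs h (hnm x)
      omega
    · have hys : IsSignedPerm (x * sT r s) := isp_mul hx (isp_sT hr hrs)
      have hyd : (x * sT r s) s < (x * sT r s) r := by
        have e1 : (x * sT r s) r = x s := by rw [Equiv.Perm.mul_apply, sT_at_r hr hrs]
        have e2 : (x * sT r s) s = x r := by rw [Equiv.Perm.mul_apply, sT_at_s hr hrs]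
        omega
      have h2 := bL_mul_sT hys hr hrs hyd (hnm (x * sT r s))
      rw [mul_assoc, sT_mul_self hr hrs, mul_one] at h2
      omega

lemma bL_prod_le (l : List ℕ) : bL ((l.map sgen).prod) ≤ l.length := by
  induction l using List.reverseRecOn with
  | nil => simp [bL_one]
  | append_singleton l a ih =>
    rw [List.map_append, List.prod_append]
    simp only [List.map_cons, List.map_nil, List.prod_cons, List.prod_nil, mul_one]
    calc bL ((l.map sgen).prod * sgen a) ≤ bL ((l.map sgen).prod) + 1 :=
          bL_step (by
            clear ih
            induction l with
            | nil => simpa using isp_one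
            | cons b t iht => simpa using isp_mul (isp_sgen b) iht) a
      _ ≤ l.length + 1 := by omega
      _ = (l ++ [a]).length := by simp

lemma isp_prod (l : List ℕ) : IsSignedPerm ((l.map sgen).prod) := by
  induction l with
  | nil => simpa using isp_one
  | cons b t iht => simpa using isp_mul (isp_sgen b) iht

lemma exists_word {w : Equiv.Perm ℤ} (hw : IsSignedPerm w) :
    ∃ l : List ℕ, (l.map sgen).prod = w ∧ l.length = bL w := by
  generalize hgen : bL w = n
  induction n using Nat.strong_induction_on generalizing w with
  | _ n ih =>
    rcases Nat.eq_zero_or_pos n with hn | hn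
    · subst hn
      have hempty : bInv w = ∅ := by
        rw [bL] at hgen
        exact (Set.ncard_eq_zero (bInv_finite hw)).mp hgen
      have hw1 : w = 1 := by
        have hasc : ∀ i : ℤ, 1 ≤ i → w i < w (i + 1) := by
          intro i hi
          have hni : (i, i + 1) ∉ bInv w := by rw [hempty]; exact Set.notMem_empty _
          have hne : w i ≠ w (i + 1) := fun hc => by have := w.injective hc; omega
          simp only [bInv, Set.mem_setOf_eq] at hni
          push_neg at hni
          have := hni (by omega) (by omega)
          omega
        have h01 : (0, 1) ∉ bInv w := by rw [hempty]; exact Set.notMem_empty _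
        simp only [bInv, Set.mem_setOf_eq] at h01
        push_neg at h01
        have hw0 : w 0 = 0 := signed_zero hw
        have h1 : w 1 ≠ 0 := fun hc => by
          have : w 1 = w 0 := by rw [hc, hw0]
          have := w.injective this
          omega
        have h1' := h01 (by omega) (by omega)
        rw [hw0] at h1'
        exact eq_one_of_ascending hw (by omega) hasc
      exact ⟨[], by simp [hw1], by simp⟩
    · have hne : (bInv w).Nonempty := by
        apply Set.nonempty_of_ncard_ne_zero
        rw [← bL, hgen]
        omega
      rcases exists_descent hw hne with h | ⟨i, hi, h⟩
      · have hstep := bL_mul_sT0 hw h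
        have hws : IsSignedPerm (w * sT (-1) 1) := isp_mul hw isp_sT0
        obtain ⟨l, hl, hlen⟩ := ih (bL (w * sT (-1) 1)) (by omega) hws rfl
        refine ⟨l ++ [0], ?_, ?_⟩
        · rw [List.map_append, List.prod_append]
          simp only [List.map_cons, List.map_nil, List.prod_cons, List.prod_nil, mul_one]
          rw [hl]
          show w * sT (-1) 1 * sgen 0 = w
          rw [show sgen 0 = sT (-1) 1 from rfl, mul_assoc, sT0_mul_self, mul_one]
        · simp only [List.length_append, List.length_cons, List.length_nil]
          omega
      · set m : ℕ := (i - 1).toNat with hm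
        have hmi : (m : ℤ) + 1 = i := by omega
        have hgeneq : sgen (m + 1) = sT i (i + 1) := by
          rw [sgen_succ_eq, hmi, show (m : ℤ) + 2 = i + 1 by omega]
        have hri : (0 : ℤ) < i := by omega
        have hrsi : i < i + 1 := by omega
        have hnm : ∀ k, i < k → k < i + 1 → ¬(w (i + 1) < w k ∧ w k < w i) := by
          intro k h1 h2; omega
        have hstep := bL_mul_sT hw hri hrsi h hnm
        have hws : IsSignedPerm (w * sT i (i + 1)) := isp_mul hw (isp_sT hri hrsi)
        obtain ⟨l, hl, hlen⟩ := ih (bL (w * sT i (i + 1))) (by omega) hws rfl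
        refine ⟨l ++ [m + 1], ?_, ?_⟩
        · rw [List.map_append, List.prod_append]
          simp only [List.map_cons, List.map_nil, List.prod_cons, List.prod_nil, mul_one]
          rw [hl, hgeneq, mul_assoc, sT_mul_self hri hrsi, mul_one]
        · simp only [List.length_append, List.length_cons, List.length_nil]
          omega

lemma blength_eq_bL {w : Equiv.Perm ℤ} (hw : IsSignedPerm w) : blength w = bL w := by
  obtain ⟨l, hl, hlen⟩ := exists_word hw
  apply le_antisymm
  · exact Nat.sInf_le ⟨l, hl, hlen⟩
  · have hmem := Nat.sInf_mem (⟨bL w, l, hl, hlen⟩ :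
      {p | ∃ l : List ℕ, (l.map sgen).prod = w ∧ l.length = p}.Nonempty)
    obtain ⟨l', hl', hlen'⟩ := hmem
    calc bL w = bL ((l'.map sgen).prod) := by rw [hl']
      _ ≤ l'.length := bL_prod_le l'
      _ = blength w := hlen'


/-- **The canonical transition inversion decreases length by one.**
Let `w ∈ B_∞` be a non-increasing signed permutation and `(r,s)` the lexicographically
largest pair of positive integers with `w(r) > w(s)`.  Then `ℓ(w t_{rs}) = ℓ(w) - 1`. -/
theorem length_canonical_transposition (w : Equiv.Perm ℤ) (hw : IsSignedPerm w)
    (hni : ¬ ∀ i : ℤ, 0 < i → w i < w (i + 1))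
    (r s : ℤ) (hr : 0 < r) (hrs : r < s) (hinv : w s < w r)
    (hlex : ∀ r' s' : ℤ, 0 < r' → r' < s' → w s' < w r' →
      r' < r ∨ (r' = r ∧ s' ≤ s)) :
    blength (w * sT r s) + 1 = blength w := by
  have hnm : ∀ k, r < k → k < s → ¬(w s < w k ∧ w k < w r) := by
    intro k h1 h2 ⟨a, b⟩
    rcases hlex k s (by omega) h2 a with h | ⟨h, _⟩ <;> omega
  have hv : IsSignedPerm (w * sT r s) := isp_mul hw (isp_sT hr hrs)
  rw [blength_eq_bL hv, blength_eq_bL hw]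
  exact bL_mul_sT hw hr hrs hinv hnm
end

section
/- Let a = a₁…aₚ be a reduced word for a signed permutation, and let β be the type-B elementary Coxeter-Knuth move applied to four consecutive letters a_i a_{i+1} a_{i+2} a_{i+3}. If this 4-letter subword has a peak in position 2 (i.e. a_i < a_{i+1} > a_{i+2}) and β acts nontrivially, then the resulting 4-letter word β(a_i a_{i+1} a_{i+2} a_{i+3}) has a peak in position 3. -/
/-- The word `x₁x₂x₃x₄` has a peak in position 2: `x₁ < x₂ > x₃`. -/
def peak2P : ℕ × ℕ × ℕ × ℕ → Prop
  | (a, b, c, _) => a < b ∧ c < b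

/-- The word `x₁x₂x₃x₄` has a peak in position 3: `x₂ < x₃ > x₄`. -/
def peak3P : ℕ × ℕ × ℕ × ℕ → Prop
  | (_, b, c, d) => b < c ∧ d < c

def peak2B (w : ℕ × ℕ × ℕ × ℕ) : Bool :=
  match w with | (a, b, c, _) => decide (a < b ∧ c < b)

def peak3B (w : ℕ × ℕ × ℕ × ℕ) : Bool :=
  match w with | (_, b, c, d) => decide (b < c ∧ d < c)

/-- The generators `s_x`, `s_y` commute, i.e. `|x - y| > 1`. -/
def commB (x y : ℕ) : Bool := decide (x + 1 < y ∨ y + 1 < x)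

/-- Reversal of a four-letter word. -/
def rev4 : ℕ × ℕ × ℕ × ℕ → ℕ × ℕ × ℕ × ℕ
  | (a, b, c, d) => (d, c, b, a)

/-- The type-B elementary Coxeter–Knuth move `β` applied to a four-letter word with peak in
position 2: the long braid move `0101 ↦ 1010`, the witnessed short braid moves
`(a,b+1,b,b+1) ↦ (a,b,b+1,b)` and `(b,b+1,b,a) ↦ (b+1,b,b+1,a)` for `a < b`, and otherwise
the peak-moving commutation by the smallest position-transposition `s_j` yielding a
commutation-equivalent word with peak in position 3. -/
def betaPeak2 : ℕ × ℕ × ℕ × ℕ → ℕ × ℕ × ℕ × ℕ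
  | (a, b, c, d) =>
    if (a, b, c, d) = (0, 1, 0, 1) then (1, 0, 1, 0)
    else if b = c + 1 ∧ d = c + 1 ∧ a < c then (a, c, c + 1, c)
    else if a = c ∧ b = c + 1 ∧ d < c then (c + 1, c, c + 1, d)
    else if commB a b && peak3B (b, a, c, d) then (b, a, c, d)
    else if commB b c && peak3B (a, c, b, d) then (a, c, b, d)
    else if commB c d && peak3B (a, b, d, c) then (a, b, d, c)
    else (a, b, c, d)

/-- The type-B elementary Coxeter–Knuth move `β` on four-letter words: words without a peak
are fixed; a word with a peak in position 3 is treated by reversing, applying the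
peak-in-position-2 rules and reversing back. -/
def betaMove (w : ℕ × ℕ × ℕ × ℕ) : ℕ × ℕ × ℕ × ℕ :=
  if peak2B w then betaPeak2 w
  else if peak3B w then rev4 (betaPeak2 (rev4 w))
  else w

/-- The signed permutation represented by a four-letter word. -/
def prod4 : ℕ × ℕ × ℕ × ℕ → Equiv.Perm ℤ
  | (a, b, c, d) => sgen a * sgen b * sgen c * sgen d

/-- **The Coxeter–Knuth move `β` moves a peak from position 2 to position 3.**
If a reduced four-letter word of a signed permutation has a peak in position 2 and `β` acts
nontrivially on it, then the resulting word has a peak in position 3. -/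
theorem betaMove_peak3_of_peak2 (q : ℕ × ℕ × ℕ × ℕ)
    (hred : blength (prod4 q) = 4) (hpeak : peak2P q) (hnt : betaMove q ≠ q) :
    peak3P (betaMove q) := by
  obtain ⟨a, b, c, d⟩ := q
  have hp2 : peak2B (a, b, c, d) = true := by
    simpa [peak2B, peak2P] using hpeak
  simp only [betaMove, hp2, if_true] at hnt ⊢
  unfold betaPeak2 at hnt ⊢
  dsimp only at hnt ⊢
  split_ifs at hnt ⊢ with h1 h2 h3 h4 h5 h6 <;>
    (simp_all [peak3P, peak3B, commB, Prod.ext_iff]) <;> omega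
end

section
/- The type-B elementary Coxeter-Knuth move β is an involution on the set of reduced words of length 4 of any signed permutation w with ℓ(w)=4, and β fixes a reduced word i₁i₂i₃i₄ if and only if i₁i₂i₃i₄ has no peak. -/
/-! ### Basic facts about the generators -/

lemma sgen_zero : sgen 0 = Equiv.swap (-1) 1 := by simp [sgen, sT]

lemma sgen_succ (n : ℕ) : sgen (n+1) =
    Equiv.swap ((n:ℤ)+1) ((n:ℤ)+2) * Equiv.swap (-((n:ℤ)+1)) (-((n:ℤ)+2)) := by
  have h : ¬ ((n:ℤ)+2 = -((n:ℤ)+1)) := by omega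
  simp only [sgen, sT, if_neg h]

lemma swap_commute {a b c d : ℤ} (h1 : a ≠ c) (h2 : a ≠ d) (h3 : b ≠ c) (h4 : b ≠ d) :
    Commute (Equiv.swap a b) (Equiv.swap c d) := by
  unfold Commute SemiconjBy
  ext x
  simp only [Equiv.Perm.mul_apply, Equiv.swap_apply_def]
  split_ifs <;> omega

lemma swap_braid {a b c : ℤ} (hab : a ≠ b) (hac : a ≠ c) (hbc : b ≠ c) :
    Equiv.swap a b * Equiv.swap b c * Equiv.swap a b =
    Equiv.swap b c * Equiv.swap a b * Equiv.swap b c := by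
  have h1 := Equiv.swap_mul_swap_mul_swap (x := c) (y := b) (z := a) hbc.symm hac.symm
  have h2 := Equiv.swap_mul_swap_mul_swap (x := a) (y := b) (z := c) hab hac
  rw [Equiv.swap_comm b a, Equiv.swap_comm c b] at h1
  rw [h1, h2, Equiv.swap_comm c a]

lemma sandwich {G : Type*} [Group G] (A A' B B' : G) (h1 : Commute A A')
    (h2 : Commute A B') (h3 : Commute A' B) :
    (A*A')*((B*B')*(A*A')) = (A*B*A)*(A'*B'*A') := by
  simp only [mul_assoc]
  rw [← mul_assoc A' B, h3.eq, mul_assoc B A', ← mul_assoc B' A, ← h2.eq, mul_assoc A B',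
    ← mul_assoc A' A, ← h1.eq, mul_assoc A A']

/-- `sgen n` is an involution. -/
lemma sgen_sq (n : ℕ) : sgen n * sgen n = 1 := by
  cases n with
  | zero => rw [sgen_zero, Equiv.swap_mul_self]
  | succ n =>
    rw [sgen_succ]
    have hc : Commute (Equiv.swap ((n:ℤ)+1) ((n:ℤ)+2)) (Equiv.swap (-((n:ℤ)+1)) (-((n:ℤ)+2))) :=
      swap_commute (by omega) (by omega) (by omega) (by omega)
    calc Equiv.swap ((n:ℤ)+1) ((n:ℤ)+2) * Equiv.swap (-((n:ℤ)+1)) (-((n:ℤ)+2)) *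
          (Equiv.swap ((n:ℤ)+1) ((n:ℤ)+2) * Equiv.swap (-((n:ℤ)+1)) (-((n:ℤ)+2)))
        = Equiv.swap ((n:ℤ)+1) ((n:ℤ)+2) * Equiv.swap ((n:ℤ)+1) ((n:ℤ)+2) *
          (Equiv.swap (-((n:ℤ)+1)) (-((n:ℤ)+2)) * Equiv.swap (-((n:ℤ)+1)) (-((n:ℤ)+2))) := by
          rw [mul_assoc, ← mul_assoc (Equiv.swap (-((n:ℤ)+1)) (-((n:ℤ)+2))), ← hc.eq,
            mul_assoc, mul_assoc]
      _ = 1 := by rw [Equiv.swap_mul_self, Equiv.swap_mul_self, mul_one]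

lemma sgen_inv (n : ℕ) : (sgen n)⁻¹ = sgen n := inv_eq_of_mul_eq_one_right (sgen_sq n)

lemma sgen_sqK (n : ℕ) (x : Equiv.Perm ℤ) : sgen n * (sgen n * x) = x := by
  rw [← mul_assoc, sgen_sq, one_mul]

/-- Commutation relation. -/
lemma sgen_comm {i j : ℕ} (h : i + 1 < j) : Commute (sgen i) (sgen j) := by
  obtain ⟨m, rfl⟩ : ∃ m, j = m + 1 := ⟨j - 1, by omega⟩
  cases i with
  | zero =>
    rw [sgen_zero, sgen_succ]
    have h1 : (1:ℤ) ≤ (m:ℤ) := by exact_mod_cast by omega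
    exact ((swap_commute (by omega) (by omega) (by omega) (by omega)).mul_right
      (swap_commute (by omega) (by omega) (by omega) (by omega)))
  | succ i =>
    rw [sgen_succ, sgen_succ]
    have hm : (i:ℤ) + 2 < (m:ℤ) + 1 := by exact_mod_cast by omega
    exact (((swap_commute (by omega) (by omega) (by omega) (by omega)).mul_right
      (swap_commute (by omega) (by omega) (by omega) (by omega))).mul_left
      ((swap_commute (by omega) (by omega) (by omega) (by omega)).mul_right
      (swap_commute (by omega) (by omega) (by omega) (by omega))))

lemma sgen_comm' {i j : ℕ} (h : i + 1 < j ∨ j + 1 < i) : sgen i * sgen j = sgen j * sgen i := by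
  rcases h with h | h
  · exact (sgen_comm h).eq
  · exact ((sgen_comm h).symm).eq

lemma sgen_commK {i j : ℕ} (h : i + 1 < j ∨ j + 1 < i) (x : Equiv.Perm ℤ) :
    sgen i * (sgen j * x) = sgen j * (sgen i * x) := by
  rw [← mul_assoc, sgen_comm' h, mul_assoc]

/-- Braid relation for generators `≥ 1`. -/
lemma sgen_braid (i : ℕ) :
    sgen (i+1) * (sgen (i+2) * sgen (i+1)) = sgen (i+2) * (sgen (i+1) * sgen (i+2)) := by
  set a : ℤ := (i:ℤ)+1 with ha
  have h1 : sgen (i+1) = Equiv.swap a (a+1) * Equiv.swap (-a) (-(a+1)) := by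
    rw [sgen_succ]; congr 2 <;> push_cast [ha] <;> ring
  have h2 : sgen (i+2) = Equiv.swap (a+1) (a+2) * Equiv.swap (-(a+1)) (-(a+2)) := by
    rw [sgen_succ (i+1)]; congr 2 <;> push_cast [ha] <;> ring
  have hpos : (1:ℤ) ≤ a := by omega
  rw [h1, h2]
  rw [sandwich _ _ _ _ (swap_commute (by omega) (by omega) (by omega) (by omega))
      (swap_commute (by omega) (by omega) (by omega) (by omega))
      (swap_commute (by omega) (by omega) (by omega) (by omega)),
    sandwich _ _ _ _ (swap_commute (by omega) (by omega) (by omega) (by omega))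
      (swap_commute (by omega) (by omega) (by omega) (by omega))
      (swap_commute (by omega) (by omega) (by omega) (by omega))]
  rw [swap_braid (by omega) (by omega) (by omega), swap_braid (by omega) (by omega) (by omega)]

lemma sgen_braid' {c : ℕ} (hc : 1 ≤ c) :
    sgen c * (sgen (c+1) * sgen c) = sgen (c+1) * (sgen c * sgen (c+1)) := by
  obtain ⟨i, rfl⟩ : ∃ i, c = i + 1 := ⟨c - 1, by omega⟩
  exact sgen_braid i

lemma sgen_braidK {c : ℕ} (hc : 1 ≤ c) (x : Equiv.Perm ℤ) :
    sgen c * (sgen (c+1) * (sgen c * x)) = sgen (c+1) * (sgen c * (sgen (c+1) * x)) := by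
  have h := congrArg (· * x) (sgen_braid' hc)
  simpa [mul_assoc] using h

/-- The long braid relation `s₀s₁s₀s₁ = s₁s₀s₁s₀`. -/
lemma sgen_braid0 :
    sgen 0 * (sgen 1 * (sgen 0 * sgen 1)) = sgen 1 * (sgen 0 * (sgen 1 * sgen 0)) := by
  have h1 : sgen 1 = Equiv.swap 1 2 * Equiv.swap (-1) (-2) := by
    have := sgen_succ 0; rw [this]; norm_num
  rw [sgen_zero, h1]
  ext x
  by_cases hx1 : x = 1
  · subst hx1; norm_num [Equiv.Perm.mul_apply, Equiv.swap_apply_def]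
  by_cases hx2 : x = 2
  · subst hx2; norm_num [Equiv.Perm.mul_apply, Equiv.swap_apply_def]
  by_cases hx3 : x = -1
  · subst hx3; norm_num [Equiv.Perm.mul_apply, Equiv.swap_apply_def]
  by_cases hx4 : x = -2
  · subst hx4; norm_num [Equiv.Perm.mul_apply, Equiv.swap_apply_def]
  · simp [Equiv.Perm.mul_apply, Equiv.swap_apply_def, hx1, hx2, hx3, hx4]

/-! ### Length facts -/

lemma blength_le {v : Equiv.Perm ℤ} {l : List ℕ} (h : (l.map sgen).prod = v) :
    blength v ≤ l.length :=
  Nat.sInf_le ⟨l, h, rfl⟩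

lemma prod_reverse (l : List ℕ) : ((l.reverse).map sgen).prod = ((l.map sgen).prod)⁻¹ := by
  induction l with
  | nil => simp
  | cons a t ih =>
    simp only [List.reverse_cons, List.map_append, List.map_cons, List.map_nil,
      List.prod_append, List.prod_cons, List.prod_nil, ih, mul_inv_rev, sgen_inv, mul_one]

lemma blength_inv_le (v : Equiv.Perm ℤ) (hne : ∃ l : List ℕ, (l.map sgen).prod = v) :
    blength v⁻¹ ≤ blength v := by
  obtain ⟨l, hl⟩ := hne
  have hne' : {p | ∃ l : List ℕ, (l.map sgen).prod = v ∧ l.length = p}.Nonempty :=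
    ⟨l.length, l, hl, rfl⟩
  obtain ⟨l₀, h₀, hlen₀⟩ := Nat.sInf_mem hne'
  calc blength v⁻¹ ≤ l₀.reverse.length := blength_le (by rw [prod_reverse, h₀])
    _ = blength v := by simpa [blength] using hlen₀

lemma prod4_list (a b c d : ℕ) :
    prod4 (a, b, c, d) = (([a, b, c, d] : List ℕ).map sgen).prod := by
  simp [prod4, mul_assoc]

lemma prod4_rev (x : ℕ × ℕ × ℕ × ℕ) : prod4 (rev4 x) = (prod4 x)⁻¹ := by
  obtain ⟨a, b, c, d⟩ := x
  simp [prod4, rev4, mul_inv_rev, sgen_inv, mul_assoc]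

lemma rev4_rev4 (x : ℕ × ℕ × ℕ × ℕ) : rev4 (rev4 x) = x := by
  obtain ⟨a, b, c, d⟩ := x; rfl

lemma peak2B_iff (x : ℕ × ℕ × ℕ × ℕ) : peak2B x = true ↔ peak2P x := by
  obtain ⟨a, b, c, d⟩ := x; simp [peak2B, peak2P]

lemma peak3B_iff (x : ℕ × ℕ × ℕ × ℕ) : peak3B x = true ↔ peak3P x := by
  obtain ⟨a, b, c, d⟩ := x; simp [peak3B, peak3P]

lemma peak2P_rev (x : ℕ × ℕ × ℕ × ℕ) : peak2P (rev4 x) ↔ peak3P x := by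
  obtain ⟨a, b, c, d⟩ := x; simp [rev4, peak2P, peak3P, and_comm]

/-! ### Unfolding `betaMove` -/

lemma betaMove_of_peak2 {x : ℕ × ℕ × ℕ × ℕ} (h2 : peak2P x) :
    betaMove x = betaPeak2 x := by
  have b2 : peak2B x = true := (peak2B_iff x).2 h2
  simp [betaMove, b2]

lemma betaMove_of_peak3 {x : ℕ × ℕ × ℕ × ℕ} (h2 : ¬ peak2P x) (h3 : peak3P x) :
    betaMove x = rev4 (betaPeak2 (rev4 x)) := by
  have b2 : peak2B x = false := by
    rw [Bool.eq_false_iff]; exact fun hh => h2 ((peak2B_iff x).1 hh)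
  have b3 : peak3B x = true := (peak3B_iff x).2 h3
  simp [betaMove, b2, b3]

lemma betaMove_of_nopeak {x : ℕ × ℕ × ℕ × ℕ} (h2 : ¬ peak2P x) (h3 : ¬ peak3P x) :
    betaMove x = x := by
  have b2 : peak2B x = false := by
    rw [Bool.eq_false_iff]; exact fun hh => h2 ((peak2B_iff x).1 hh)
  have b3 : peak3B x = false := by
    rw [Bool.eq_false_iff]; exact fun hh => h3 ((peak3B_iff x).1 hh)
  simp [betaMove, b2, b3]

/-! ### Product preservation -/

lemma betaPeak2_prod (a b c d : ℕ) : prod4 (betaPeak2 (a, b, c, d)) = prod4 (a, b, c, d) := by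
  simp only [betaPeak2, Prod.mk.injEq, Bool.and_eq_true, commB, peak3B, decide_eq_true_eq]
  split_ifs with h1 h2 h3 h4 h5 h6
  · obtain ⟨rfl, rfl, rfl, rfl⟩ := h1
    simp only [prod4, mul_assoc]
    exact sgen_braid0.symm
  · obtain ⟨rfl, rfl, hac⟩ := h2
    simp only [prod4, mul_assoc]
    congr 1
    exact sgen_braid' (by omega)
  · obtain ⟨rfl, rfl, hdc⟩ := h3
    simp only [prod4, mul_assoc]
    exact (sgen_braidK (by omega) (sgen d)).symm
  · simp only [prod4, mul_assoc]
    exact (sgen_commK h4.1 _).symm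
  · simp only [prod4, mul_assoc]
    congr 1
    exact (sgen_commK h5.1 _).symm
  · simp only [prod4, mul_assoc]
    congr 2
    exact (sgen_comm' h6.1).symm
  · rfl

/-! ### The main structural lemma for a peak in position 2 -/

lemma betaPeak2_spec {a b c d : ℕ} (hab : a < b) (hcb : c < b)
    (hlen : blength (prod4 (a, b, c, d)) = 4) :
    peak3P (betaPeak2 (a, b, c, d)) ∧ ¬ peak2P (betaPeak2 (a, b, c, d)) ∧
    betaPeak2 (a, b, c, d) ≠ (a, b, c, d) ∧
    betaPeak2 (rev4 (betaPeak2 (a, b, c, d))) = rev4 (a, b, c, d) := by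
  have hshort : ∀ x y : ℕ, sgen x * sgen y ≠ prod4 (a, b, c, d) := by
    intro x y hxy
    have h2 : blength (prod4 (a, b, c, d)) ≤ 2 :=
      blength_le (l := [x, y]) (by simpa [mul_assoc] using hxy)
    omega
  by_cases h1 : (a, b, c, d) = ((0 : ℕ), (1 : ℕ), (0 : ℕ), (1 : ℕ))
  · rw [h1]
    have hr : betaPeak2 ((0 : ℕ), (1 : ℕ), (0 : ℕ), (1 : ℕ)) = (1, 0, 1, 0) := by decide
    rw [hr]
    exact ⟨by simp [peak3P], by simp [peak2P], by decide, by decide⟩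
  by_cases h2 : b = c + 1 ∧ d = c + 1 ∧ a < c
  · have hr : betaPeak2 (a, b, c, d) = (a, c, c + 1, c) := by
      simp only [betaPeak2, if_neg h1, if_pos h2]
    rw [hr]
    refine ⟨by simp [peak3P], by simp [peak2P], ?_, ?_⟩
    · simp only [ne_eq, Prod.mk.injEq, not_and]
      omega
    · simp only [rev4]
      simp only [betaPeak2, commB, peak3B, Bool.and_eq_true, decide_eq_true_eq,
        Prod.mk.injEq, eq_self_iff_true, lt_self_iff_false, true_and, and_true, false_and,
        and_false, or_false, false_or, ite_true, ite_false]
      split_ifs <;>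
        first
          | rfl
          | omega
          | (simp only [Prod.mk.injEq, true_and, and_true]; omega)
          | (simp only [Prod.mk.injEq, true_and, and_true])
  by_cases h3 : a = c ∧ b = c + 1 ∧ d < c
  · have hr : betaPeak2 (a, b, c, d) = (c + 1, c, c + 1, d) := by
      simp only [betaPeak2, if_neg h1, if_neg h2, if_pos h3]
    rw [hr]
    refine ⟨by simp [peak3P]; omega, by simp [peak2P], ?_, ?_⟩
    · simp only [ne_eq, Prod.mk.injEq, not_and]
      omega
    · simp only [rev4]
      simp only [betaPeak2, commB, peak3B, Bool.and_eq_true, decide_eq_true_eq,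
        Prod.mk.injEq, eq_self_iff_true, lt_self_iff_false, true_and, and_true, false_and,
        and_false, or_false, false_or, ite_true, ite_false]
      split_ifs <;>
        first
          | rfl
          | omega
          | (simp only [Prod.mk.injEq, true_and, and_true]; omega)
          | (simp only [Prod.mk.injEq, true_and, and_true])
  by_cases h4 : (commB a b && peak3B (b, a, c, d)) = true
  · have hr : betaPeak2 (a, b, c, d) = (b, a, c, d) := by
      simp only [betaPeak2, if_neg h1, if_neg h2, if_neg h3, if_pos h4]
    rw [hr]
    simp only [commB, peak3B, Bool.and_eq_true, decide_eq_true_eq, Prod.mk.injEq,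
      not_and, not_or] at h1 h2 h3 h4
    refine ⟨by simp [peak3P]; omega, by simp [peak2P]; omega, ?_, ?_⟩
    · simp only [ne_eq, Prod.mk.injEq, not_and]
      omega
    · simp only [rev4]
      simp only [betaPeak2, commB, peak3B, Bool.and_eq_true, decide_eq_true_eq,
        Prod.mk.injEq, eq_self_iff_true, lt_self_iff_false, true_and, and_true, false_and,
        and_false, or_false, false_or, ite_true, ite_false]
      split_ifs <;>
        first
          | rfl
          | omega
          | (simp only [Prod.mk.injEq, true_and, and_true]; omega)
          | (simp only [Prod.mk.injEq, true_and, and_true])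
  by_cases h5 : (commB b c && peak3B (a, c, b, d)) = true
  · have hr : betaPeak2 (a, b, c, d) = (a, c, b, d) := by
      simp only [betaPeak2, if_neg h1, if_neg h2, if_neg h3, if_neg h4, if_pos h5]
    rw [hr]
    simp only [commB, peak3B, Bool.and_eq_true, decide_eq_true_eq, Prod.mk.injEq,
      not_and, not_or] at h1 h2 h3 h4 h5
    refine ⟨by simp [peak3P]; omega, by simp [peak2P]; omega, ?_, ?_⟩
    · simp only [ne_eq, Prod.mk.injEq, not_and]
      omega
    · simp only [rev4]
      simp only [betaPeak2, commB, peak3B, Bool.and_eq_true, decide_eq_true_eq,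
        Prod.mk.injEq, eq_self_iff_true, lt_self_iff_false, true_and, and_true, false_and,
        and_false, or_false, false_or, ite_true, ite_false]
      split_ifs <;>
        first
          | rfl
          | omega
          | (simp only [Prod.mk.injEq, true_and, and_true]; omega)
          | (simp only [Prod.mk.injEq, true_and, and_true])
  by_cases h6 : (commB c d && peak3B (a, b, d, c)) = true
  · have hr : betaPeak2 (a, b, c, d) = (a, b, d, c) := by
      simp only [betaPeak2, if_neg h1, if_neg h2, if_neg h3, if_neg h4, if_neg h5, if_pos h6]
    rw [hr]
    simp only [commB, peak3B, Bool.and_eq_true, decide_eq_true_eq, Prod.mk.injEq,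
      not_and, not_or] at h1 h2 h3 h4 h5 h6
    refine ⟨by simp [peak3P]; omega, by simp [peak2P]; omega, ?_, ?_⟩
    · simp only [ne_eq, Prod.mk.injEq, not_and]
      omega
    · simp only [rev4]
      simp only [betaPeak2, commB, peak3B, Bool.and_eq_true, decide_eq_true_eq,
        Prod.mk.injEq, eq_self_iff_true, lt_self_iff_false, true_and, and_true, false_and,
        and_false, or_false, false_or, ite_true, ite_false]
      split_ifs <;>
        first
          | rfl
          | omega
          | (simp only [Prod.mk.injEq, true_and, and_true]; omega)
          | (simp only [Prod.mk.injEq, true_and, and_true])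
  · -- catch-all: contradicts reducedness
    exfalso
    simp only [commB, peak3B, Bool.and_eq_true, decide_eq_true_eq, Prod.mk.injEq,
      not_and, not_or] at h1 h2 h3 h4 h5 h6
    have hcases : d = c ∨ (b = a + 1 ∧ c = a ∧ d = a + 1 ∧ 1 ≤ a) ∨ (d = b ∧ c + 1 < b) := by
      omega
    rcases hcases with rfl | ⟨rfl, rfl, rfl, ha⟩ | ⟨rfl, hcb'⟩
    · exact hshort a b (by simp [prod4, mul_assoc, sgen_sq])
    · refine hshort (c + 1) c ?_
      simp only [prod4, mul_assoc]
      rw [sgen_braidK ha (sgen (c + 1))]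
      simp [mul_assoc, sgen_sq]
    · refine hshort a c ?_
      simp only [prod4, mul_assoc]
      congr 1
      rw [← sgen_commK (by omega : c + 1 < d ∨ d + 1 < c) (sgen d), sgen_sq, mul_one]

/-! ### The main theorem -/

/-- **`β` is an involution on the reduced words of a signed permutation of length 4**, mapping
reduced words of `w` to reduced words of `w`, and it fixes a word if and only if the word
has no peak. -/
theorem betaMove_involution (w : Equiv.Perm ℤ) (hw : IsSignedPerm w) (hlen : blength w = 4)
    (q : ℕ × ℕ × ℕ × ℕ) (hq : prod4 q = w) :
    prod4 (betaMove q) = w ∧ betaMove (betaMove q) = q ∧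
      (betaMove q = q ↔ ¬ peak2P q ∧ ¬ peak3P q) := by
  obtain ⟨a, b, c, d⟩ := q
  have hlen4 : blength (prod4 (a, b, c, d)) = 4 := by rw [hq]; exact hlen
  by_cases hp2 : a < b ∧ c < b
  · -- peak in position 2
    obtain ⟨hpk3, hnpk2, hne, hinv⟩ := betaPeak2_spec hp2.1 hp2.2 hlen4
    have hnpk3 : ¬ peak3P (betaPeak2 (rev4 (betaPeak2 (a, b, c, d)))) ∨ True := Or.inr trivial
    have hmove : betaMove (a, b, c, d) = betaPeak2 (a, b, c, d) := betaMove_of_peak2 hp2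
    rw [hmove]
    have hmove2 : betaMove (betaPeak2 (a, b, c, d)) = (a, b, c, d) := by
      rw [betaMove_of_peak3 hnpk2 hpk3, hinv, rev4_rev4]
    refine ⟨by rw [betaPeak2_prod, hq], hmove2, ?_⟩
    constructor
    · intro h; exact absurd h hne
    · intro h; exact absurd (hp2 : peak2P (a, b, c, d)) h.1
  · by_cases hp3 : b < c ∧ d < c
    · -- peak in position 3
      have hqrev : prod4 ((d, c, b, a) : ℕ × ℕ × ℕ × ℕ) = w⁻¹ := by
        rw [show ((d, c, b, a) : ℕ × ℕ × ℕ × ℕ) = rev4 (a, b, c, d) from rfl, prod4_rev, hq]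
      have hlenrev : blength (prod4 ((d, c, b, a) : ℕ × ℕ × ℕ × ℕ)) = 4 := by
        rw [hqrev]
        have le1 : blength w⁻¹ ≤ blength w :=
          blength_inv_le w ⟨[a, b, c, d], by rw [← prod4_list]; exact hq⟩
        have le2 : blength w⁻¹⁻¹ ≤ blength w⁻¹ :=
          blength_inv_le w⁻¹ ⟨[d, c, b, a], by rw [← prod4_list]; exact hqrev⟩
        rw [inv_inv] at le2
        omega
      obtain ⟨hpk3', hnpk2', hne', hinv'⟩ := betaPeak2_spec hp3.2 hp3.1 hlenrev
      have hinv'' : betaPeak2 (rev4 (betaPeak2 (d, c, b, a))) = (a, b, c, d) := by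
        rw [hinv']; rfl
      have hmove : betaMove (a, b, c, d) = rev4 (betaPeak2 (d, c, b, a)) :=
        betaMove_of_peak3 hp2 hp3
      rw [hmove]
      have hprod : prod4 (rev4 (betaPeak2 (d, c, b, a))) = w := by
        rw [prod4_rev, betaPeak2_prod, hqrev, inv_inv]
      have hmove2 : betaMove (rev4 (betaPeak2 (d, c, b, a))) = (a, b, c, d) := by
        rw [betaMove_of_peak2 ((peak2P_rev _).2 hpk3'), hinv'']
      refine ⟨hprod, hmove2, ?_⟩
      constructor
      · intro h
        exfalso
        apply hne'
        have h2 := congrArg rev4 h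
        rw [rev4_rev4] at h2
        rw [h2]
        rfl
      · intro h; exact absurd (hp3 : peak3P (a, b, c, d)) h.2
    · -- no peak
      have hmove : betaMove (a, b, c, d) = (a, b, c, d) := betaMove_of_nopeak hp2 hp3
      rw [hmove]
      refine ⟨hq, by rw [hmove], ?_⟩
      constructor
      · intro _; exact ⟨hp2, hp3⟩
      · intro _; rfl
end

section
/- Haiman's elementary shifted dual equivalence operators satisfy hᵢ ∘ hⱼ = hⱼ ∘ hᵢ on Sₙ whenever |i − j| > 4. -/
/-- Pattern recognition for `h₁` with relative values `0,1,2,3`: the pairs of relative values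
corresponding to the original patterns `1x2y, x12y, 1x4y, x14y, 4x1y, x41y, 4x3y, x43y`. -/
def hPat (a b : ℕ) : Bool :=
  (a == 0 && b == 1) || (a == 0 && b == 3) || (a == 3 && b == 0) || (a == 3 && b == 2)

/-- Haiman's elementary shifted dual equivalence operator `hᵢ` on permutations of
`{1,…,n} ⊆ ℕ`: it fixes all values outside `I = {i, i+1, i+2, i+3}` and permutes the values
in `I` so that the flattening of `hᵢ(π)|_I` equals `h₁` applied to the flattening of `π|_I`.
Concretely, if `q₁ < q₂ < q₃ < q₄` are the positions of the values of `I` in `π`, then the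
values in positions `q₂, q₄` (resp. `q₁, q₄`) are interchanged according to the `h₁`
patterns on the relative values, and otherwise `π` is fixed. -/
def hOp (i : ℕ) (π : Equiv.Perm ℕ) : Equiv.Perm ℕ :=
  let ps := List.insertionSort (· ≤ ·) [π⁻¹ i, π⁻¹ (i + 1), π⁻¹ (i + 2), π⁻¹ (i + 3)]
  let q₁ := ps.getD 0 0; let q₂ := ps.getD 1 0; let q₃ := ps.getD 2 0; let q₄ := ps.getD 3 0
  if hPat (π q₁ - i) (π q₃ - i) then π * Equiv.swap q₂ q₄
  else if hPat (π q₂ - i) (π q₃ - i) then π * Equiv.swap q₁ q₄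
  else π

lemma getD_mem_sort (a b c d k : ℕ) (hk : k < 4) :
    (List.insertionSort (· ≤ ·) [a,b,c,d]).getD k 0 ∈ [a,b,c,d] := by
  have hp := List.perm_insertionSort (· ≤ ·) [a,b,c,d]
  have hl : (List.insertionSort (· ≤ ·) [a,b,c,d]).length = 4 := by
    rw [hp.length_eq]; rfl
  rw [List.getD_eq_getElem _ _ (by omega)]
  exact hp.mem_iff.mp (List.getElem_mem _)

lemma corr_fix (i : ℕ) (π : Equiv.Perm ℕ) (x : ℕ)
    (hx : x ∉ [π⁻¹ i, π⁻¹ (i+1), π⁻¹ (i+2), π⁻¹ (i+3)]) :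
    (π⁻¹ * hOp i π) x = x := by
  have h0 := getD_mem_sort (π⁻¹ i) (π⁻¹ (i+1)) (π⁻¹ (i+2)) (π⁻¹ (i+3)) 0 (by norm_num)
  have h1 := getD_mem_sort (π⁻¹ i) (π⁻¹ (i+1)) (π⁻¹ (i+2)) (π⁻¹ (i+3)) 1 (by norm_num)
  have h3 := getD_mem_sort (π⁻¹ i) (π⁻¹ (i+1)) (π⁻¹ (i+2)) (π⁻¹ (i+3)) 3 (by norm_num)
  simp only [hOp]
  split_ifs with hc1 hc2
  · simp only [Equiv.Perm.mul_apply, Equiv.swap_apply_def]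
    split_ifs with ha hb
    · exact absurd (ha ▸ h1) hx
    · exact absurd (hb ▸ h3) hx
    · simp
  · simp only [Equiv.Perm.mul_apply, Equiv.swap_apply_def]
    split_ifs with ha hb
    · exact absurd (ha ▸ h0) hx
    · exact absurd (hb ▸ h3) hx
    · simp
  · simp

lemma corr_transport (i : ℕ) (π σ : Equiv.Perm ℕ)
    (h : ∀ x ∈ [π⁻¹ i, π⁻¹ (i+1), π⁻¹ (i+2), π⁻¹ (i+3)], σ x = x) :
    (π * σ)⁻¹ * hOp i (π * σ) = π⁻¹ * hOp i π := by
  have hinv : ∀ x ∈ [π⁻¹ i, π⁻¹ (i+1), π⁻¹ (i+2), π⁻¹ (i+3)], σ⁻¹ x = x := by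
    intro x hx
    conv_lhs => rw [← h x hx]
    simp
  have e0 : (π * σ)⁻¹ i = π⁻¹ i := by
    rw [mul_inv_rev, Equiv.Perm.mul_apply]; apply hinv; simp
  have e1 : (π * σ)⁻¹ (i+1) = π⁻¹ (i+1) := by
    rw [mul_inv_rev, Equiv.Perm.mul_apply]; apply hinv; simp
  have e2 : (π * σ)⁻¹ (i+2) = π⁻¹ (i+2) := by
    rw [mul_inv_rev, Equiv.Perm.mul_apply]; apply hinv; simp
  have e3 : (π * σ)⁻¹ (i+3) = π⁻¹ (i+3) := by
    rw [mul_inv_rev, Equiv.Perm.mul_apply]; apply hinv; simp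
  have v : ∀ k, k < 4 →
      (π * σ) ((List.insertionSort (· ≤ ·) [π⁻¹ i, π⁻¹ (i+1), π⁻¹ (i+2), π⁻¹ (i+3)]).getD k 0)
      = π ((List.insertionSort (· ≤ ·) [π⁻¹ i, π⁻¹ (i+1), π⁻¹ (i+2), π⁻¹ (i+3)]).getD k 0) := by
    intro k hk
    rw [Equiv.Perm.mul_apply, h _ (getD_mem_sort _ _ _ _ k hk)]
  simp only [hOp, e0, e1, e2, e3, v 0 (by norm_num), v 1 (by norm_num), v 2 (by norm_num),
    v 3 (by norm_num)]
  split_ifs <;> group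

/-- **Distant shifted dual equivalence operators commute:** `hᵢ ∘ hⱼ = hⱼ ∘ hᵢ` on `Sₙ`
whenever `|i - j| > 4`. -/
theorem hOp_commute (n i j : ℕ) (hi : 1 ≤ i) (hj : 1 ≤ j)
    (hin : i + 3 ≤ n) (hjn : j + 3 ≤ n) (hij : 4 < |(i : ℤ) - (j : ℤ)|)
    (π : Equiv.Perm ℕ) (hπ : ∀ x : ℕ, x ∉ Finset.Icc 1 n → π x = x) :
    hOp i (hOp j π) = hOp j (hOp i π) := by
  obtain ⟨σ, hσ⟩ : ∃ s, s = π⁻¹ * hOp i π := ⟨_, rfl⟩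
  obtain ⟨τ, hτ⟩ : ∃ s, s = π⁻¹ * hOp j π := ⟨_, rfl⟩
  have hdisj : ∀ a ∈ [π⁻¹ i, π⁻¹ (i+1), π⁻¹ (i+2), π⁻¹ (i+3)],
      a ∉ [π⁻¹ j, π⁻¹ (j+1), π⁻¹ (j+2), π⁻¹ (j+3)] := by
    intro a ha hb
    have : ∀ u v : ℕ, π⁻¹ u = π⁻¹ v → u = v := fun u v h => by
      simpa using congrArg π h
    have hij' : i + 4 < j ∨ j + 4 < i := by
      rcases abs_cases ((i:ℤ) - j) with ⟨he, _⟩ | ⟨he, _⟩ <;> omega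
    simp only [List.mem_cons, List.not_mem_nil, or_false] at ha hb
    rcases ha with h1|h1|h1|h1 <;> rcases hb with h2|h2|h2|h2 <;>
      · have := this _ _ (h1.symm.trans h2)
        omega
  have hσfix : ∀ x ∈ [π⁻¹ j, π⁻¹ (j+1), π⁻¹ (j+2), π⁻¹ (j+3)], σ x = x := by
    intro x hx
    rw [hσ]
    refine corr_fix i π x fun hmem => ?_
    exact hdisj x hmem hx
  have hτfix : ∀ x ∈ [π⁻¹ i, π⁻¹ (i+1), π⁻¹ (i+2), π⁻¹ (i+3)], τ x = x := by
    intro x hx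
    rw [hτ]
    refine corr_fix j π x fun hmem => ?_
    exact hdisj _ hx hmem
  have hcomm : σ * τ = τ * σ := by
    have hd : Equiv.Perm.Disjoint σ τ := by
      intro x
      by_cases hx : x ∈ [π⁻¹ i, π⁻¹ (i+1), π⁻¹ (i+2), π⁻¹ (i+3)]
      · exact Or.inr (hτfix x hx)
      · exact Or.inl (hσ ▸ corr_fix i π x hx)
    exact hd.commute
  have hi' : hOp i π = π * σ := by rw [hσ]; group
  have hj' : hOp j π = π * τ := by rw [hτ]; group
  have key1 : hOp j (hOp i π) = π * σ * τ := by
    rw [hi']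
    have := hτ ▸ corr_transport j π σ hσfix
    calc hOp j (π * σ) = (π * σ) * ((π * σ)⁻¹ * hOp j (π * σ)) := by group
    _ = (π * σ) * τ := by rw [this]
  have key2 : hOp i (hOp j π) = π * τ * σ := by
    rw [hj']
    have := hσ ▸ corr_transport i π τ hτfix
    calc hOp i (π * τ) = (π * τ) * ((π * τ)⁻¹ * hOp i (π * τ)) := by group
    _ = (π * τ) * σ := by rw [this]
  rw [key1, key2, mul_assoc, mul_assoc, hcomm]
end
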